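/- arXiv:math/0603098 — 8 statements merged into one kernel-verified Lean document; each statement's English description precedes it below -/
import Mathlib

section
/- Let A be an n×n upper triangular complex matrix with ‖A‖ ≤ 1 and 1 ∉ spec(A). Then for all indices k, ℓ: |((I − A)⁻¹)_{kℓ}| · dist(1, spec(A)) ≤ 2 if k < ℓ, ≤ 1 if k = ℓ, and ((I − A)⁻¹)_{kℓ} = 0 if k > ℓ. -/
/-!
Put `B = (1 - A)⁻¹`. A contraction satisfies `A* A ≤ 1`; conjugating by `B` and using
`A B = B - 1` turns this into `B + B* - 1 ≥ 0`. The `(k, ℓ)` entry of this positive semidefinite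
matrix is `B k ℓ` for `k < ℓ`, so the `2 × 2` principal minors give
`‖B k ℓ‖ ≤ ‖B k k‖ + ‖B ℓ ℓ‖ - 1`. Since `B` is upper triangular, `B j j = (1 - λ_j)⁻¹`, whose
norm is at most `1 / dist(1, spec A)`.
-/

noncomputable def opN {n : ℕ} (A : Matrix (Fin n) (Fin n) ℂ) : ℝ :=
  ‖Matrix.toEuclideanCLM (𝕜 := ℂ) A‖

open Matrix
open scoped ComplexOrder MatrixOrder Matrix.Norms.L2Operator

theorem CStarAlgebra.one_le_add_star_of_one_sub_mul_eq_one {A : Type*} [CStarAlgebra A]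
    [PartialOrder A] [StarOrderedRing A] {a b : A} (ha : ‖a‖ ≤ 1) (hb : (1 - a) * b = 1) :
    1 ≤ b + star b := by
  have hcontr : star a * a ≤ 1 := by
    calc star a * a ≤ algebraMap ℝ A (‖a‖ ^ 2) := star_mul_le_algebraMap_norm_sq
      _ ≤ algebraMap ℝ A 1 := by gcongr; nlinarith [norm_nonneg a]
      _ = 1 := map_one _
  have hab : a * b = b - 1 := by rw [← hb]; noncomm_ring
  have key : star b * b + (1 - (b + star b)) ≤ star b * b + 0 := by
    calc star b * b + (1 - (b + star b)) = star (a * b) * (a * b) := by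
          rw [hab, star_sub, star_one]; noncomm_ring
      _ = star b * (star a * a) * b := by rw [star_mul]; noncomm_ring
      _ ≤ star b * 1 * b := star_left_conjugate_le_conjugate hcontr b
      _ = star b * b + 0 := by noncomm_ring
  exact sub_nonpos.mp (le_of_add_le_add_left key)

namespace Matrix

variable {n : Type*}

section Triangular

variable [Fintype n] [LinearOrder n] {R : Type*} [CommRing R]

theorem IsUpperTriangular.mul_apply_self {M N : Matrix n n R} (hM : M.IsUpperTriangular)
    (hN : N.IsUpperTriangular) (i : n) : (M * N) i i = M i i * N i i := by
  rw [mul_apply, Finset.sum_eq_single i]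
  · intro j _ hji
    rcases hji.lt_or_gt with h | h
    · rw [hM h, zero_mul]
    · rw [hN h, mul_zero]
  · simp

variable [DecidableEq n]

theorem IsUpperTriangular.inv {M : Matrix n n R} (hM : M.IsUpperTriangular) :
    M⁻¹.IsUpperTriangular := by
  by_cases h : IsUnit M.det
  · have := M.invertibleOfIsUnitDet h
    exact blockTriangular_inv_of_blockTriangular hM
  · rw [nonsing_inv_apply_not_isUnit M h]
    exact blockTriangular_zero

theorem IsUpperTriangular.inv_apply_self {K : Type*} [Field K] {M : Matrix n n K}
    (hM : M.IsUpperTriangular) (hu : IsUnit M) (i : n) : M⁻¹ i i = (M i i)⁻¹ := by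
  refine eq_inv_of_mul_eq_one_left ?_
  rw [← hM.inv.mul_apply_self hM, nonsing_inv_mul M ((isUnit_iff_isUnit_det M).mp hu),
    one_apply_eq]

theorem IsUpperTriangular.apply_self_mem_spectrum [Nontrivial R] {M : Matrix n n R}
    (hM : M.IsUpperTriangular) (i : n) : M i i ∈ spectrum R M := by
  refine mem_spectrum_of_isRoot_charpoly ?_
  rw [charpoly_of_isUpperTriangular M hM, Polynomial.IsRoot, Polynomial.eval_prod]
  exact Finset.prod_eq_zero (Finset.mem_univ i) (by simp)

end Triangular

variable {𝕜 : Type*} [RCLike 𝕜]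

theorem PosSemidef.norm_apply_sq_le {P : Matrix n n 𝕜} (hP : P.PosSemidef) (i j : n) :
    ‖P i j‖ ^ 2 ≤ RCLike.re (P i i) * RCLike.re (P j j) := by
  have hdet := (hP.submatrix ![i, j]).det_nonneg
  simp only [det_fin_two, submatrix_apply, cons_val_zero, cons_val_one] at hdet
  rw [← hP.isHermitian.apply i j, RCLike.star_def, RCLike.conj_mul,
    ← hP.isHermitian.coe_re_apply_self i, ← hP.isHermitian.coe_re_apply_self j,
    ← RCLike.ofReal_pow, ← RCLike.ofReal_mul, ← RCLike.ofReal_sub, RCLike.ofReal_nonneg,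
    sub_nonneg] at hdet
  rwa [← hP.isHermitian.apply i j, norm_star]

theorem PosSemidef.two_mul_norm_apply_le {P : Matrix n n 𝕜} (hP : P.PosSemidef) (i j : n) :
    2 * ‖P i j‖ ≤ RCLike.re (P i i) + RCLike.re (P j j) := by
  have hi : 0 ≤ RCLike.re (P i i) := RCLike.nonneg_iff.mp hP.diag_nonneg |>.1
  have hj : 0 ≤ RCLike.re (P j j) := RCLike.nonneg_iff.mp hP.diag_nonneg |>.1
  nlinarith [hP.norm_apply_sq_le i j, sq_nonneg (RCLike.re (P i i) - RCLike.re (P j j)),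
    norm_nonneg (P i j)]

theorem IsUpperTriangular.norm_apply_le_of_posSemidef [LinearOrder n]
    {B : Matrix n n 𝕜} (hB : B.IsUpperTriangular) (h : (B + Bᴴ - 1).PosSemidef) {k ℓ : n}
    (hkℓ : k < ℓ) : ‖B k ℓ‖ ≤ ‖B k k‖ + ‖B ℓ ℓ‖ - 1 := by
  have h2 := h.two_mul_norm_apply_le k ℓ
  simp only [sub_apply, add_apply, conjTranspose_apply, hB hkℓ, star_zero, add_zero,
    one_apply_ne hkℓ.ne, sub_zero, one_apply_eq, map_sub, RCLike.star_def, map_add,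
    RCLike.conj_re, RCLike.one_re] at h2
  linarith [RCLike.re_le_norm (B k k), RCLike.re_le_norm (B ℓ ℓ)]

theorem IsUpperTriangular.norm_inv_one_sub_apply_self_mul_infDist_le [Fintype n] [LinearOrder n]
    {A : Matrix n n ℂ} (hA : A.IsUpperTriangular) (h1 : (1 : ℂ) ∉ spectrum ℂ A)
    (j : n) : ‖(1 - A)⁻¹ j j‖ * Metric.infDist 1 (spectrum ℂ A) ≤ 1 := by
  have hu : IsUnit (1 - A) := by simpa using spectrum.notMem_iff.mp h1
  have hmem := hA.apply_self_mem_spectrum j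
  have hne : 1 - A j j ≠ 0 := sub_ne_zero.mpr fun h => h1 (h ▸ hmem)
  have hM : (1 - A).IsUpperTriangular := blockTriangular_one.sub hA
  rw [hM.inv_apply_self hu j, sub_apply, one_apply_eq, norm_inv,
    inv_mul_le_iff₀ (norm_pos_iff.mpr hne), mul_one, ← dist_eq_norm]
  exact Metric.infDist_le_dist_of_mem hmem

end Matrix

theorem stmt1 {n : ℕ} (A : Matrix (Fin n) (Fin n) ℂ)
    (htri : ∀ k ℓ : Fin n, ℓ < k → A k ℓ = 0)
    (hA : opN A ≤ 1) (h1 : (1 : ℂ) ∉ spectrum ℂ A) :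
    ∀ k ℓ : Fin n,
      (k < ℓ → ‖((1 - A)⁻¹) k ℓ‖ * Metric.infDist 1 (spectrum ℂ A) ≤ 2) ∧
      (k = ℓ → ‖((1 - A)⁻¹) k ℓ‖ * Metric.infDist 1 (spectrum ℂ A) ≤ 1) ∧
      (ℓ < k → ((1 - A)⁻¹) k ℓ = 0) := by
  intro k ℓ
  have hAtri : A.IsUpperTriangular := fun i j hij => htri i j hij
  have hM : (1 - A).IsUpperTriangular := blockTriangular_one.sub hAtri
  have hB : (1 - A)⁻¹.IsUpperTriangular := hM.inv
  have hdiag := hAtri.norm_inv_one_sub_apply_self_mul_infDist_le h1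
  refine ⟨fun hkℓ => ?_, fun hkℓ => hkℓ ▸ hdiag k, fun hℓk => hB hℓk⟩
  have hu : IsUnit (1 - A) := by simpa using spectrum.notMem_iff.mp h1
  have hnorm : ‖A‖ = opN A := rfl
  have hpsd : ((1 - A)⁻¹ + ((1 - A)⁻¹)ᴴ - 1).PosSemidef := le_iff.mp <|
    CStarAlgebra.one_le_add_star_of_one_sub_mul_eq_one (hnorm ▸ hA) <|
      mul_nonsing_inv _ ((isUnit_iff_isUnit_det _).mp hu)
  have hd : 0 ≤ Metric.infDist 1 (spectrum ℂ A) := Metric.infDist_nonneg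
  calc ‖(1 - A)⁻¹ k ℓ‖ * Metric.infDist 1 (spectrum ℂ A)
      ≤ (‖(1 - A)⁻¹ k k‖ + ‖(1 - A)⁻¹ ℓ ℓ‖ - 1) * Metric.infDist 1 (spectrum ℂ A) := by
        gcongr; exact hB.norm_apply_le_of_posSemidef hpsd hkℓ
    _ ≤ 2 := by nlinarith [hdiag k, hdiag ℓ]
end

section
/- Let A be an n×n upper triangular matrix with ‖A‖ ≤ 1 and 1 ∉ spec(A). Define C = (I − A)⁻¹ + (I − A*)⁻¹ − I. Then C is positive semidefinite. -/
/-! With `D = (1 - A)⁻¹`, the matrix `D + Dᴴ - 1` is the congruence `Dᴴ (1 - AᴴA) D`, and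
`1 - AᴴA` is positive semidefinite for a contraction `A` by the C⋆-identity `‖AᴴA‖ = ‖A‖²`. -/

open scoped Matrix ComplexOrder

namespace Matrix

variable {n : Type*} [Fintype n] [DecidableEq n] {R : Type*} [CommRing R] [StarRing R]

theorem inv_one_sub_add_inv_one_sub_conjTranspose_sub_one {A : Matrix n n R}
    (hunit : IsUnit (1 - A)) :
    (1 - A)⁻¹ + (1 - Aᴴ)⁻¹ - 1 = ((1 - A)⁻¹)ᴴ * (1 - Aᴴ * A) * (1 - A)⁻¹ := by
  set B := 1 - A with hB
  have hAB : A = 1 - B := by rw [hB, sub_sub_cancel]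
  have hBB : B * B⁻¹ = 1 := mul_nonsing_inv B ((isUnit_iff_isUnit_det B).mp hunit)
  have hBB' : (B⁻¹)ᴴ * Bᴴ = 1 := by rw [← conjTranspose_mul, hBB, conjTranspose_one]
  rw [hAB, conjTranspose_sub, conjTranspose_one, sub_sub_cancel, ← conjTranspose_nonsing_inv]
  calc B⁻¹ + (B⁻¹)ᴴ - 1
      = (B⁻¹)ᴴ * Bᴴ * B⁻¹ + (B⁻¹)ᴴ * (B * B⁻¹) - ((B⁻¹)ᴴ * Bᴴ) * (B * B⁻¹) := by
        rw [hBB, hBB', Matrix.one_mul, Matrix.mul_one, Matrix.mul_one]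
    _ = (B⁻¹)ᴴ * (1 - (1 - Bᴴ) * (1 - B)) * B⁻¹ := by noncomm_ring

open scoped MatrixOrder Norms.L2Operator in
theorem posSemidef_one_sub_conjTranspose_mul_self {A : Matrix n n ℂ}
    (hA : ‖toEuclideanCLM (𝕜 := ℂ) A‖ ≤ 1) : (1 - Aᴴ * A).PosSemidef := by
  rw [← cstar_norm_def] at hA
  rw [← nonneg_iff_posSemidef, sub_nonneg,
    ← CStarAlgebra.norm_le_one_iff_of_nonneg (Aᴴ * A) (star_mul_self_nonneg A),
    ← star_eq_conjTranspose, CStarRing.norm_star_mul_self]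
  exact mul_le_one₀ hA (norm_nonneg A) hA

end Matrix

theorem stmt2_general {n : ℕ} (A : Matrix (Fin n) (Fin n) ℂ)
    (hA : opN A ≤ 1) (h1 : (1 : ℂ) ∉ spectrum ℂ A) :
    Matrix.PosSemidef ((1 - A)⁻¹ + (1 - Aᴴ)⁻¹ - 1) := by
  have hunit : IsUnit (1 - A) := by simpa using spectrum.notMem_iff.mp h1
  rw [Matrix.inv_one_sub_add_inv_one_sub_conjTranspose_sub_one hunit]
  exact (Matrix.posSemidef_one_sub_conjTranspose_mul_self hA).conjTranspose_mul_mul_same _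

theorem stmt2 {n : ℕ} (A : Matrix (Fin n) (Fin n) ℂ)
    (htri : ∀ k ℓ : Fin n, ℓ < k → A k ℓ = 0)
    (hA : opN A ≤ 1) (h1 : (1 : ℂ) ∉ spectrum ℂ A) :
    Matrix.PosSemidef ((1 - A)⁻¹ + (1 - Aᴴ)⁻¹ - 1) :=
  stmt2_general A hA h1
end

section
/- Let Mₙ be the n×n matrix with entries (Mₙ)_{kℓ} = 2 if k < ℓ, 1 if k = ℓ, 0 if k > ℓ. Then the operator norm of Mₙ equals cot(π/(4n)). -/
/-!
Let `y k = ∑_{l ≥ k} x l` be the tail sums of `x`, so that `x k = y k - y (k + 1)`, `y n = 0` and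
`(M x) k = y k + y (k + 1)`. With `D = ∑ (‖y k‖² + ‖y (k + 1)‖²)` and `R = ∑ re ⟪y k, y (k + 1)⟫`
this gives `‖M x‖² = D + 2R` and `‖x‖² = D - 2R`. The path-graph bound `2R ≤ c D` with
`c = cos (π / (2n))`, proved by weighting with the positive solution `w k = sin ((n - k) π / (2n))`
of `w k + w (k + 2) = 2 c w (k + 1)`, is attained at `y = w`; and `(1 + c) / (1 - c)` is
`cot² (π / (4n))`.
-/

open Real

open Finset Matrix RealInnerProductSpace

section PathForm

variable {E : Type*} [NormedAddCommGroup E] [InnerProductSpace ℝ E]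

lemma sum_norm_add_sq_succ (y : ℕ → E) (n : ℕ) :
    ∑ k ∈ range n, ‖y k + y (k + 1)‖ ^ 2 =
      ∑ k ∈ range n, (‖y k‖ ^ 2 + ‖y (k + 1)‖ ^ 2) + 2 * ∑ k ∈ range n, ⟪y k, y (k + 1)⟫ := by
  rw [mul_sum, ← sum_add_distrib]
  exact sum_congr rfl fun k _ => by rw [norm_add_sq_real]; ring

lemma sum_norm_sub_sq_succ (y : ℕ → E) (n : ℕ) :
    ∑ k ∈ range n, ‖y k - y (k + 1)‖ ^ 2 =
      ∑ k ∈ range n, (‖y k‖ ^ 2 + ‖y (k + 1)‖ ^ 2) - 2 * ∑ k ∈ range n, ⟪y k, y (k + 1)⟫ := by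
  rw [mul_sum, ← sum_sub_distrib]
  exact sum_congr rfl fun k _ => by rw [norm_sub_sq_real]; ring

variable {n : ℕ} {c : ℝ} {w : ℕ → ℝ}

/- Ground state representation: a solution `w` of the three-term recurrence with `w n = 0` is a null
vector of the form on the left, so substituting `y = w • z` leaves only the differences of `z`. -/
lemma path_form_eq_sum_of_eq_smul (hw1 : w 1 = c * w 0) (hwn : w n = 0)
    (hrec : ∀ k, w k + w (k + 2) = 2 * c * w (k + 1)) {y z : ℕ → E}
    (hyz : ∀ k ≤ n, y k = w k • z k) :
    c * ∑ k ∈ range n, (‖y k‖ ^ 2 + ‖y (k + 1)‖ ^ 2) - 2 * ∑ k ∈ range n, ⟪y k, y (k + 1)⟫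
      = ∑ k ∈ range n, w k * w (k + 1) * ‖z k - z (k + 1)‖ ^ 2 := by
  set G : ℕ → ℝ := fun j => (c * w j ^ 2 - w j * w (j + 1)) * ‖z j‖ ^ 2
  have hterm : ∀ k < n, c * (‖y k‖ ^ 2 + ‖y (k + 1)‖ ^ 2) - 2 * ⟪y k, y (k + 1)⟫
      - w k * w (k + 1) * ‖z k - z (k + 1)‖ ^ 2 = G k - G (k + 1) := fun k hk => by
    simp only [G, hyz k hk.le, hyz (k + 1) hk, norm_smul, real_inner_smul_left,
      real_inner_smul_right, norm_sub_sq_real, Real.norm_eq_abs, mul_pow, sq_abs]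
    linear_combination (-‖z (k + 1)‖ ^ 2 * w (k + 1)) * hrec k
  rw [← sub_eq_zero, mul_sum, mul_sum, ← sum_sub_distrib, ← sum_sub_distrib,
    sum_congr rfl fun k hk => hterm k (mem_range.1 hk), sum_range_sub']
  simp only [G, hw1, hwn]
  ring

lemma two_mul_sum_inner_succ_le (hw1 : w 1 = c * w 0) (hwn : w n = 0)
    (hrec : ∀ k, w k + w (k + 2) = 2 * c * w (k + 1)) (hpos : ∀ k < n, 0 < w k)
    {y : ℕ → E} (hy : y n = 0) :
    2 * ∑ k ∈ range n, ⟪y k, y (k + 1)⟫ ≤ c * ∑ k ∈ range n, (‖y k‖ ^ 2 + ‖y (k + 1)‖ ^ 2) := by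
  have hyw : ∀ k ≤ n, y k = w k • (w k)⁻¹ • y k := fun k hk => by
    rcases hk.lt_or_eq with hk | rfl
    · exact (smul_inv_smul₀ (hpos k hk).ne' _).symm
    · rw [hwn, hy, zero_smul]
  have hw : ∀ k < n, 0 ≤ w k * w (k + 1) := fun k hk => by
    rcases (show k + 1 ≤ n from hk).lt_or_eq with hk' | hk'
    · exact (mul_pos (hpos k hk) (hpos _ hk')).le
    · rw [hk', hwn, mul_zero]
  have := path_form_eq_sum_of_eq_smul hw1 hwn hrec hyw
  have : 0 ≤ ∑ k ∈ range n, w k * w (k + 1) * ‖(w k)⁻¹ • y k - (w (k + 1))⁻¹ • y (k + 1)‖ ^ 2 :=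
    sum_nonneg fun k hk => mul_nonneg (hw k (mem_range.1 hk)) (sq_nonneg _)
  linarith

lemma two_mul_sum_inner_succ_eq (hw1 : w 1 = c * w 0) (hwn : w n = 0)
    (hrec : ∀ k, w k + w (k + 2) = 2 * c * w (k + 1)) {y : ℕ → E} {v : E}
    (hy : ∀ k ≤ n, y k = w k • v) :
    2 * ∑ k ∈ range n, ⟪y k, y (k + 1)⟫ = c * ∑ k ∈ range n, (‖y k‖ ^ 2 + ‖y (k + 1)‖ ^ 2) := by
  rw [eq_comm, ← sub_eq_zero, path_form_eq_sum_of_eq_smul (z := fun _ => v) hw1 hwn hrec hy]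
  simp

lemma one_sub_mul_sum_norm_add_sq_le (hw1 : w 1 = c * w 0) (hwn : w n = 0)
    (hrec : ∀ k, w k + w (k + 2) = 2 * c * w (k + 1)) (hpos : ∀ k < n, 0 < w k)
    {y : ℕ → E} (hy : y n = 0) :
    (1 - c) * ∑ k ∈ range n, ‖y k + y (k + 1)‖ ^ 2
      ≤ (1 + c) * ∑ k ∈ range n, ‖y k - y (k + 1)‖ ^ 2 := by
  rw [sum_norm_add_sq_succ, sum_norm_sub_sq_succ]
  linear_combination 2 * two_mul_sum_inner_succ_le hw1 hwn hrec hpos hy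

lemma one_sub_mul_sum_norm_add_sq_eq (hw1 : w 1 = c * w 0) (hwn : w n = 0)
    (hrec : ∀ k, w k + w (k + 2) = 2 * c * w (k + 1)) {y : ℕ → E} {v : E}
    (hy : ∀ k ≤ n, y k = w k • v) :
    (1 - c) * ∑ k ∈ range n, ‖y k + y (k + 1)‖ ^ 2
      = (1 + c) * ∑ k ∈ range n, ‖y k - y (k + 1)‖ ^ 2 := by
  rw [sum_norm_add_sq_succ, sum_norm_sub_sq_succ]
  linear_combination 2 * two_mul_sum_inner_succ_eq hw1 hwn hrec hy

end PathForm

noncomputable def sinWeight (n : ℕ) (θ : ℝ) (k : ℕ) : ℝ := sin ((n - k) * θ)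

namespace sinWeight

variable {n : ℕ} {θ : ℝ}

lemma add_add_two (k : ℕ) :
    sinWeight n θ k + sinWeight n θ (k + 2) = 2 * cos θ * sinWeight n θ (k + 1) := by
  have h₁ : ((n : ℝ) - k) * θ = (n - (k + 1)) * θ + θ := by ring
  have h₂ : ((n : ℝ) - (k + 2)) * θ = (n - (k + 1)) * θ - θ := by ring
  simp only [sinWeight]
  push_cast
  rw [h₁, h₂, sin_add, sin_sub]
  ring

lemma self : sinWeight n θ n = 0 := by simp [sinWeight]

lemma zero (h : n * θ = π / 2) : sinWeight n θ 0 = 1 := by simp [sinWeight, h]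

lemma one (h : n * θ = π / 2) : sinWeight n θ 1 = cos θ * sinWeight n θ 0 := by
  rw [zero h, mul_one, sinWeight, Nat.cast_one, sub_mul, one_mul, h, sin_pi_div_two_sub]

lemma pos (hθ : 0 < θ) (h : n * θ < π) {k : ℕ} (hk : k < n) : 0 < sinWeight n θ k := by
  have hk' : (k : ℝ) + 1 ≤ n := by exact_mod_cast hk
  apply sin_pos_of_pos_of_lt_pi
  · nlinarith
  · nlinarith [(Nat.cast_nonneg k : (0 : ℝ) ≤ k)]

end sinWeight

lemma Real.cos_lt_one_of_pos_of_le_pi {x : ℝ} (hx₀ : 0 < x) (hx : x ≤ π) : cos x < 1 := by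
  simpa using cos_lt_cos_of_nonneg_of_le_pi le_rfl hx hx₀

lemma Real.cot_nonneg {x : ℝ} (hx₀ : 0 ≤ x) (hx : x ≤ π / 2) : 0 ≤ cot x := by
  rw [cot_eq_cos_div_sin]
  exact div_nonneg (cos_nonneg_of_mem_Icc ⟨by linarith [pi_pos], hx⟩)
    (sin_nonneg_of_nonneg_of_le_pi hx₀ (by linarith [pi_pos]))

lemma one_sub_cos_two_mul_mul_cot_sq {x : ℝ} (hx : sin x ≠ 0) :
    (1 - cos (2 * x)) * cot x ^ 2 = 1 + cos (2 * x) := by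
  rw [cot_eq_cos_div_sin, cos_two_mul]
  field_simp
  linear_combination (-2 * cos x ^ 2) * sin_sq_add_cos_sq x

section TailSum

variable {n : ℕ} {M : Type*} [AddCommMonoid M]

def tailSum (x : Fin n → M) (k : ℕ) : M :=
  ∑ l : Fin n with k ≤ l.val, x l

variable (x : Fin n → M)

lemma tailSum_of_le {k : ℕ} (hk : n ≤ k) : tailSum x k = 0 :=
  sum_eq_zero fun l hl => absurd ((mem_filter.1 hl).2.trans_lt l.isLt) hk.not_gt

lemma tailSum_eq_add_tailSum_succ (i : Fin n) : tailSum x i = x i + tailSum x (i + 1) := by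
  rw [tailSum, tailSum, ← sum_insert (by simp)]
  congr 1
  ext l
  simp only [mem_filter, mem_univ, true_and, mem_insert, Fin.ext_iff]
  omega

lemma tailSum_eq_of_sub {G : Type*} [AddCommGroup G] (x : Fin n → G) {y : ℕ → G} (hy : y n = 0) (hx : ∀ i : Fin n, x i = y i - y (i + 1))
    {k : ℕ} (hk : k ≤ n) : tailSum x k = y k := by
  refine Nat.decreasingInduction (motive := fun k _ => tailSum x k = y k) (fun k hk ih => ?_) ?_ hk
  · rw [tailSum_eq_add_tailSum_succ x ⟨k, hk⟩, hx]
    simp [ih]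
  · rw [tailSum_of_le x le_rfl, hy]

end TailSum

lemma mulVec_eq_tailSum_add {R : Type*} [Semiring R] {n : ℕ} (x : Fin n → R) (i : Fin n) :
    ((Matrix.of fun k ℓ : Fin n => if k < ℓ then (2 : R) else if k = ℓ then 1 else 0) *ᵥ x) i
      = tailSum x i + tailSum x (i + 1) := by
  simp only [Matrix.mulVec, dotProduct, tailSum, sum_filter, ← sum_add_distrib, Matrix.of_apply]
  refine sum_congr rfl fun l _ => ?_
  rcases lt_trichotomy i l with h | rfl | h
  · simp [h, h.le, Nat.succ_le_of_lt h, two_mul]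
  · simp
  · have : ¬ (i : ℕ) + 1 ≤ l := by omega
    simp [h.not_gt, h.not_ge, h.ne', this]

section EuclideanNorm

variable {𝕜 : Type*} [RCLike 𝕜] {n : ℕ}

lemma EuclideanSpace.norm_sq_eq_sum_range (x : EuclideanSpace 𝕜 (Fin n)) {f : ℕ → ℝ}
    (hf : ∀ i : Fin n, ‖x i‖ ^ 2 = f i) : ‖x‖ ^ 2 = ∑ k ∈ range n, f k := by
  rw [EuclideanSpace.norm_sq_eq, ← Fin.sum_univ_eq_sum_range]
  exact sum_congr rfl fun i _ => hf i

lemma norm_sq_eq_sum_tailSum_sub (x : EuclideanSpace 𝕜 (Fin n)) :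
    ‖x‖ ^ 2 = ∑ k ∈ range n, ‖tailSum x k - tailSum x (k + 1)‖ ^ 2 :=
  x.norm_sq_eq_sum_range fun i => by rw [tailSum_eq_add_tailSum_succ, add_sub_cancel_right]

lemma norm_toEuclideanCLM_sq_eq_sum_tailSum_add (x : EuclideanSpace 𝕜 (Fin n)) :
    ‖toEuclideanCLM (𝕜 := 𝕜)
        (Matrix.of fun k ℓ : Fin n => if k < ℓ then (2 : 𝕜) else if k = ℓ then 1 else 0) x‖ ^ 2
      = ∑ k ∈ range n, ‖tailSum x k + tailSum x (k + 1)‖ ^ 2 :=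
  EuclideanSpace.norm_sq_eq_sum_range _ fun i => by
    rw [ofLp_toEuclideanCLM, mulVec_eq_tailSum_add]

end EuclideanNorm

lemma ContinuousLinearMap.opNorm_eq_of_norm_sq {𝕜 E F : Type*} [NontriviallyNormedField 𝕜]
    [NormedAddCommGroup E] [NormedAddCommGroup F] [NormedSpace 𝕜 E] [NormedSpace 𝕜 F]
    (f : E →L[𝕜] F) {γ : ℝ} (hγ : 0 ≤ γ) (hle : ∀ x, ‖f x‖ ^ 2 ≤ γ ^ 2 * ‖x‖ ^ 2) {x₀ : E}
    (hx₀ : x₀ ≠ 0) (heq : ‖f x₀‖ ^ 2 = γ ^ 2 * ‖x₀‖ ^ 2) : ‖f‖ = γ := by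
  refine le_antisymm (f.opNorm_le_bound hγ fun x => ?_) ?_
  · exact (pow_le_pow_iff_left₀ (norm_nonneg _) (by positivity) two_ne_zero).1
      (by rw [mul_pow]; exact hle x)
  · have hx₀' : ‖f x₀‖ = γ * ‖x₀‖ :=
      (pow_left_inj₀ (norm_nonneg _) (by positivity) two_ne_zero).1 (by rw [mul_pow]; exact heq)
    exact le_of_mul_le_mul_right (hx₀' ▸ f.le_opNorm x₀) (norm_pos_iff.2 hx₀)

theorem stmt5 {n : ℕ} (hn : 0 < n)
    (M : Matrix (Fin n) (Fin n) ℂ)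
    (hM : M = Matrix.of fun k ℓ : Fin n =>
      if k < ℓ then (2 : ℂ) else if k = ℓ then 1 else 0) :
    opN M = Real.cot (π / (4 * n)) := by
  subst hM
  set h := π / (4 * n)
  have hh : 0 < h := by positivity
  have hnh : n * (2 * h) = π / 2 := by simp only [h]; field_simp; ring
  have h2h : 2 * h ≤ π / 2 := by nlinarith [(Nat.one_le_cast.2 hn : (1 : ℝ) ≤ n)]
  have hc : 0 < 1 - cos (2 * h) :=
    sub_pos.2 (cos_lt_one_of_pos_of_le_pi (by positivity) (by linarith))
  have hcot : (1 - cos (2 * h)) * cot h ^ 2 = 1 + cos (2 * h) :=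
    one_sub_cos_two_mul_mul_cot_sq (sin_pos_of_pos_of_lt_pi hh (by linarith)).ne'
  set w := sinWeight n (2 * h)
  set x₀ : EuclideanSpace ℂ (Fin n) := WithLp.toLp 2 fun i => ((w i - w (i + 1) : ℝ) : ℂ)
  have hx₀ : ∀ k ≤ n, tailSum x₀ k = w k • (1 : ℂ) :=
    fun k => tailSum_eq_of_sub (y := fun k => w k • (1 : ℂ)) _ (by simp [w, sinWeight.self])
      fun i => by simp [x₀]
  refine ContinuousLinearMap.opNorm_eq_of_norm_sq _ (cot_nonneg hh.le (by linarith))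
    (fun x => ?_) (x₀ := x₀) (fun h0 => ?_) ?_
  · refine le_of_mul_le_mul_left ?_ hc
    rw [← mul_assoc, hcot, norm_toEuclideanCLM_sq_eq_sum_tailSum_add, norm_sq_eq_sum_tailSum_sub]
    exact one_sub_mul_sum_norm_add_sq_le (sinWeight.one hnh) sinWeight.self sinWeight.add_add_two
      (fun k => sinWeight.pos (by positivity) (by linarith)) (tailSum_of_le _ le_rfl)
  · simpa [h0, tailSum, w, sinWeight.zero hnh] using hx₀ 0 n.zero_le
  · refine mul_left_cancel₀ hc.ne' ?_
    rw [← mul_assoc, hcot, norm_toEuclideanCLM_sq_eq_sum_tailSum_add, norm_sq_eq_sum_tailSum_sub]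
    exact one_sub_mul_sum_norm_add_sq_eq (sinWeight.one hnh) sinWeight.self
      sinWeight.add_add_two hx₀
end

section
/- Let Nₙ be the n×n nilpotent matrix with ones on the superdiagonal and zeros elsewhere, and let Dₙ = (I − Nₙ)(I − Nₙ)*. Then for each ℓ = 0,…,n−1, the vector v^{(ℓ)} with components vⱼ^{(ℓ)} = sin(π(2ℓ+1)j/(2n+1)), j = 1,…,n, satisfies Dₙ v^{(ℓ)} = 4 sin²(π(2ℓ+1)/(2(2n+1))) v^{(ℓ)}. -/
/-! With `s m = sin (θ m)` and `θ = π (2ℓ + 1) / (2n + 1)`, the vector `v` is `(s 1, …, s n)`.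
Since `s 0 = 0`, applying `(I - N)*` takes backward differences `s (k + 1) - s k`, and since
`θ (2n + 1)` is an odd multiple of `π`, `s (n + 1) = s n`, so the last difference vanishes and
`I - N` takes forward differences of these. Hence `D v` is the second difference
`2 s (k + 1) - s k - s (k + 2)`, which the sum-to-product formulas turn into
`4 sin² (θ / 2) · s (k + 1)`. -/

open Real
open scoped Matrix

def shiftMatrix (n : ℕ) (R : Type*) [Zero R] [One R] : Matrix (Fin n) (Fin n) R :=
  Matrix.of fun k l => if (l : ℕ) = (k : ℕ) + 1 then 1 else 0

section ShiftMatrix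

variable {n : ℕ} {R : Type*} [Ring R]

theorem shiftMatrix_mulVec {t : ℕ → R} (ht : t n = 0) :
    shiftMatrix n R *ᵥ (fun j : Fin n => t j) = fun k : Fin n => t ((k : ℕ) + 1) := by
  funext k
  simp only [Matrix.mulVec, dotProduct, shiftMatrix, Matrix.of_apply, ite_mul, one_mul, zero_mul]
  rw [Fin.sum_univ_eq_sum_range (fun j => if j = (k : ℕ) + 1 then t j else 0),
    Finset.sum_ite_eq']
  split_ifs with hk
  · rfl
  · rw [show (k : ℕ) + 1 = n by simp only [Finset.mem_range] at hk; omega, ht]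

theorem shiftMatrix_transpose_mulVec {s : ℕ → R} (hs : s 0 = 0) :
    (shiftMatrix n R)ᵀ *ᵥ (fun j : Fin n => s ((j : ℕ) + 1)) = fun k : Fin n => s k := by
  funext k
  simp only [Matrix.mulVec, dotProduct, Matrix.transpose_apply, shiftMatrix, Matrix.of_apply,
    ite_mul, one_mul, zero_mul]
  rw [Fin.sum_univ_eq_sum_range (fun j => if (k : ℕ) = j + 1 then s (j + 1) else 0)]
  cases hk : (k : ℕ) with
  | zero => simp [hs]
  | succ m =>
    simp only [Nat.add_right_cancel_iff, Finset.sum_ite_eq, Finset.mem_range]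
    rw [if_pos (by omega)]

theorem one_sub_shiftMatrix_mul_transpose_mulVec {s : ℕ → R} (h₀ : s 0 = 0)
    (hn : s (n + 1) = s n) :
    ((1 - shiftMatrix n R) * (1 - shiftMatrix n R)ᵀ) *ᵥ (fun j : Fin n => s ((j : ℕ) + 1)) =
      fun k : Fin n => 2 * s ((k : ℕ) + 1) - s k - s ((k : ℕ) + 2) := by
  have hdiff : (1 - shiftMatrix n R)ᵀ *ᵥ (fun j : Fin n => s ((j : ℕ) + 1)) =
      fun j : Fin n => s ((j : ℕ) + 1) - s j := by
    rw [Matrix.transpose_sub, Matrix.transpose_one, Matrix.sub_mulVec, Matrix.one_mulVec,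
      shiftMatrix_transpose_mulVec h₀]
    rfl
  rw [← Matrix.mulVec_mulVec, hdiff, Matrix.sub_mulVec, Matrix.one_mulVec,
    shiftMatrix_mulVec (t := fun m => s (m + 1) - s m) (by simp [hn])]
  funext k
  simp only [Pi.sub_apply, two_mul]
  abel

end ShiftMatrix

theorem two_mul_sin_sub_sin_sub_sin_add (a θ : ℝ) :
    2 * sin a - sin (a - θ) - sin (a + θ) = 4 * sin (θ / 2) ^ 2 * sin a := by
  have hcos : cos θ = 1 - 2 * sin (θ / 2) ^ 2 := by
    have h := cos_two_mul' (θ / 2)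
    rw [mul_div_cancel₀ θ two_ne_zero] at h
    rw [h, ← sin_sq_add_cos_sq (θ / 2)]
    ring
  rw [sin_sub, sin_add, hcos]
  ring

theorem sin_mul_add_one_eq_sin_mul {θ : ℝ} {n ℓ : ℕ}
    (h : θ * (2 * n + 1) = π * (2 * ℓ + 1)) : sin (θ * (n + 1)) = sin (θ * n) := by
  rw [← sub_eq_zero, sin_sub_sin, cos_eq_zero_iff.mpr ⟨ℓ, by push_cast; linear_combination h / 2⟩,
    mul_zero]

theorem stmt7_general {n : ℕ} (N : Matrix (Fin n) (Fin n) ℝ)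
    (hN : N = Matrix.of fun k ℓ : Fin n => if (ℓ : ℕ) = (k : ℕ) + 1 then (1 : ℝ) else 0)
    (D : Matrix (Fin n) (Fin n) ℝ) (hD : D = (1 - N) * (1 - N)ᵀ)
    (ℓ : ℕ)
    (v : Fin n → ℝ)
    (hv : v = fun j : Fin n => Real.sin (π * (2 * ℓ + 1) * ((j : ℕ) + 1) / (2 * n + 1))) :
    D.mulVec v = (4 * Real.sin (π * (2 * ℓ + 1) / (2 * (2 * n + 1))) ^ 2) • v := by
  obtain ⟨θ, hθdef⟩ : ∃ θ : ℝ, θ = π * (2 * ℓ + 1) / (2 * n + 1) := ⟨_, rfl⟩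
  have hθ : θ * (2 * n + 1) = π * (2 * ℓ + 1) := by
    rw [hθdef]; exact div_mul_cancel₀ _ (by positivity)
  have hv' : v = fun j : Fin n => sin (θ * ((j : ℕ) + 1 : ℕ)) := by
    rw [hv, hθdef]; funext j; push_cast; rw [mul_div_right_comm]
  have hhalf : π * (2 * ℓ + 1) / (2 * (2 * n + 1)) = θ / 2 := by
    rw [hθdef]; field_simp
  subst hN hD
  rw [hv', hhalf]
  refine (one_sub_shiftMatrix_mul_transpose_mulVec (s := fun m => sin (θ * m)) (by simp)
    (by exact_mod_cast sin_mul_add_one_eq_sin_mul hθ)).trans ?_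
  funext k
  simp only [Pi.smul_apply, smul_eq_mul]
  push_cast
  rw [← two_mul_sin_sub_sin_sub_sin_add (θ * ((k : ℕ) + 1)) θ]
  ring_nf

theorem stmt7 {n : ℕ} (N : Matrix (Fin n) (Fin n) ℝ)
    (hN : N = Matrix.of fun k ℓ : Fin n => if (ℓ : ℕ) = (k : ℕ) + 1 then (1 : ℝ) else 0)
    (D : Matrix (Fin n) (Fin n) ℝ) (hD : D = (1 - N) * (1 - N)ᵀ)
    (ℓ : ℕ) (hℓ : ℓ < n)
    (v : Fin n → ℝ)
    (hv : v = fun j : Fin n => Real.sin (π * (2 * ℓ + 1) * ((j : ℕ) + 1) / (2 * n + 1))) :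
    D.mulVec v = (4 * Real.sin (π * (2 * ℓ + 1) / (2 * (2 * n + 1))) ^ 2) • v :=
  stmt7_general N hN D hD ℓ v hv
end

section
/- Let M̃ₙ be the Hankel matrix with (M̃ₙ)_{jk} = 2 if j + k ≤ n, 1 if j + k = n + 1, and 0 if j + k > n + 1 (indices from 1 to n). Then for each ℓ = 0,…,n−1, the vector c^{(ℓ)} with cⱼ^{(ℓ)} = cos((2ℓ + 1/2)(π/(2n))(2j − 1)) is an eigenvector of M̃ₙ with eigenvalue cot((2ℓ + 1/2)·π/(2n)). -/
/-!
Row `j` of `M̃ₙ` is `(2, …, 2, 1, 0, …, 0)` with the `1` in column `m = n - 1 - j`, so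
`(M̃ₙ c)_j = 2 ∑_{k<m} cos ((2k+1)θ) + cos ((2m+1)θ)`. Telescoping with
`2 sin θ cos ((2k+1)θ) = sin ((2k+2)θ) - sin (2kθ)` turns this into `cot θ · sin ((2m+1)θ)`, and
`θ = (2ℓ + 1/2) π / (2n)` means `2nθ = 2ℓπ + π/2`, whence `sin ((2m+1)θ) = cos ((2j+1)θ)`.
-/

open Real Finset

theorem two_mul_sin_mul_sum_range_cos_odd (θ : ℝ) (m : ℕ) :
    2 * sin θ * ∑ k ∈ range m, cos ((2 * k + 1) * θ) = sin (2 * m * θ) := by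
  induction m with
  | zero => simp
  | succ m ih =>
    rw [mul_sum, sum_range_succ, ← mul_sum, ih]
    have h := sin_sub_sin (2 * (m + 1) * θ) (2 * m * θ)
    rw [show (2 * (m + 1) * θ - 2 * m * θ) / 2 = θ by ring,
      show (2 * (m + 1) * θ + 2 * m * θ) / 2 = (2 * m + 1) * θ by ring] at h
    push_cast
    linarith

theorem sin_mul_two_mul_sum_range_cos_odd_add_cos (θ : ℝ) (m : ℕ) :
    sin θ * (2 * ∑ k ∈ range m, cos ((2 * k + 1) * θ) + cos ((2 * m + 1) * θ)) =
      cos θ * sin ((2 * m + 1) * θ) := by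
  have h := two_mul_sin_mul_sum_range_cos_odd θ m
  have hsin := sin_sub ((2 * m + 1) * θ) θ
  rw [show (2 * m + 1) * θ - θ = 2 * m * θ by ring] at hsin
  linear_combination h + hsin

theorem sum_range_cos_odd_eq_cot_mul {θ : ℝ} (hθ : sin θ ≠ 0) (m : ℕ) :
    2 * ∑ k ∈ range m, cos ((2 * k + 1) * θ) + cos ((2 * m + 1) * θ) =
      cot θ * sin ((2 * m + 1) * θ) := by
  rw [cot_eq_cos_div_sin, div_mul_eq_mul_div, eq_div_iff hθ, mul_comm,
    sin_mul_two_mul_sum_range_cos_odd_add_cos]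

def hankelTwoOne (R : Type*) [Semiring R] (n : ℕ) : Matrix (Fin n) (Fin n) R :=
  Matrix.of fun j k : Fin n =>
      if (j : ℕ) + 1 + ((k : ℕ) + 1) ≤ n then (2 : R)
      else if (j : ℕ) + 1 + ((k : ℕ) + 1) = n + 1 then 1 else 0

theorem hankelTwoOne_mulVec_apply {R : Type*} [Semiring R] {n : ℕ} (v : ℕ → R) (j : Fin n) :
    (hankelTwoOne R n).mulVec (fun k : Fin n => v k) j =
      2 * ∑ k ∈ range (n - 1 - j), v k + v (n - 1 - j) := by
  have hj := j.isLt
  set m := n - 1 - (j : ℕ)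
  rw [Matrix.mulVec, dotProduct, hankelTwoOne]
  simp only [Matrix.of_apply]
  rw [Fin.sum_univ_eq_sum_range (fun k =>
    (if (j : ℕ) + 1 + (k + 1) ≤ n then (2 : R)
      else if (j : ℕ) + 1 + (k + 1) = n + 1 then 1 else 0) * v k)]
  have hvanish : ∀ k ∈ range n, k ∉ range (m + 1) →
      (if (j : ℕ) + 1 + (k + 1) ≤ n then (2 : R)
        else if (j : ℕ) + 1 + (k + 1) = n + 1 then 1 else 0) * v k = 0 := by
    intro k _ hk
    rw [mem_range] at hk
    rw [if_neg (by omega), if_neg (by omega), zero_mul]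
  rw [← sum_subset (range_subset_range.mpr (by omega)) hvanish, sum_range_succ,
    if_neg (by omega), if_pos (by omega), one_mul, mul_sum]
  congr 1
  refine sum_congr rfl fun k hk => ?_
  rw [mem_range] at hk
  rw [if_pos (by omega)]

theorem sin_odd_mul_sub_eq_cos_odd_mul {θ : ℝ} {n ℓ j : ℕ} (hθ : 2 * n * θ = 2 * ℓ * π + π / 2)
    (hj : j < n) : sin ((2 * (n - 1 - j : ℕ) + 1) * θ) = cos ((2 * j + 1) * θ) := by
  have harg : (2 * (n - 1 - j : ℕ) + 1) * θ = π / 2 - (2 * j + 1) * θ + ℓ * (2 * π) := by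
    rw [Nat.cast_sub (by omega), Nat.cast_sub (by omega)]
    push_cast
    linear_combination hθ
  rw [harg, sin_add_nat_mul_two_pi, sin_pi_div_two_sub]

theorem stmt8_general {n : ℕ}
    (M : Matrix (Fin n) (Fin n) ℝ)
    (hM : M = Matrix.of fun j k : Fin n =>
      if (j : ℕ) + 1 + ((k : ℕ) + 1) ≤ n then (2 : ℝ)
      else if (j : ℕ) + 1 + ((k : ℕ) + 1) = n + 1 then 1 else 0)
    (ℓ : ℕ) (hℓ : ℓ < n)
    (c : Fin n → ℝ)
    (hc : c = fun j : Fin n =>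
      Real.cos ((2 * ℓ + 1 / 2) * (π / (2 * n)) * (2 * ((j : ℕ) + 1) - 1))) :
    M.mulVec c = Real.cot ((2 * ℓ + 1 / 2) * π / (2 * n)) • c := by
  set θ := (2 * ℓ + 1 / 2) * (π / (2 * n)) with hθ
  have hn : (0 : ℝ) < n := Nat.cast_pos.mpr (Nat.zero_lt_of_lt hℓ)
  have hθn : 2 * n * θ = 2 * ℓ * π + π / 2 := by rw [hθ]; field_simp
  have hsin : sin θ ≠ 0 := by
    refine (sin_pos_of_pos_of_lt_pi (by positivity) ?_).ne'
    have : (ℓ : ℝ) + 1 ≤ n := by exact_mod_cast hℓ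
    nlinarith [pi_pos]
  have hc' : c = fun j : Fin n => (fun k : ℕ => cos ((2 * k + 1) * θ)) j := by
    rw [hc]; ext j; ring_nf
  rw [hM, hc', mul_div_assoc, ← hθ]
  ext j
  calc _ = 2 * ∑ k ∈ range (n - 1 - j), cos ((2 * k + 1) * θ)
          + cos ((2 * (n - 1 - j : ℕ) + 1) * θ) := hankelTwoOne_mulVec_apply _ j
    _ = cot θ * cos ((2 * j + 1) * θ) := by
      rw [sum_range_cos_odd_eq_cot_mul hsin, sin_odd_mul_sub_eq_cos_odd_mul hθn j.isLt]

theorem stmt8 {n : ℕ} (hn : 0 < n)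
    (M : Matrix (Fin n) (Fin n) ℝ)
    (hM : M = Matrix.of fun j k : Fin n =>
      if (j : ℕ) + 1 + ((k : ℕ) + 1) ≤ n then (2 : ℝ)
      else if (j : ℕ) + 1 + ((k : ℕ) + 1) = n + 1 then 1 else 0)
    (ℓ : ℕ) (hℓ : ℓ < n)
    (c : Fin n → ℝ)
    (hc : c = fun j : Fin n =>
      Real.cos ((2 * ℓ + 1 / 2) * (π / (2 * n)) * (2 * ((j : ℕ) + 1) - 1))) :
    M.mulVec c = Real.cot ((2 * ℓ + 1 / 2) * π / (2 * n)) • c :=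
  stmt8_general M hM ℓ hℓ c hc
end

section
/- (Eneström–Kakeya) If 0 < a₀ < a₁ < ⋯ < aₙ are real, then every zero of P(z) = a₀ + a₁z + ⋯ + aₙzⁿ lies in the open unit disc. -/
/-!
Multiplying by `1 - z` telescopes: `(1 - z) P(z) = ∑ Δa_i z^i - a_n z^(n+1)` with backward
differences `Δa_i = a_i - a_(i-1) > 0` summing to `a_n`. At a root with `|z| ≥ 1`, dividing by
`z^(n+1)` exhibits `a_n = ∑ Δa_i z^(i-n-1)` as a combination of points of the closed unit disc with
positive weights of total mass `a_n`; comparing real parts forces every such point, `1/z` among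
them, to be `1`. But `P(1) = ∑ a_i > 0`.
-/

open Finset

/-- `backwardDiff a i = a i - a (i - 1)`, with the convention `a (-1) = 0`. -/
def backwardDiff {R : Type*} [Sub R] (a : ℕ → R) : ℕ → R
  | 0 => a 0
  | i + 1 => a (i + 1) - a i

theorem sum_range_succ_backwardDiff {R : Type*} [AddCommGroup R] (a : ℕ → R) (n : ℕ) :
    ∑ i ∈ range (n + 1), backwardDiff a i = a n := by
  induction n with
  | zero => simp [backwardDiff]
  | succ n ih => rw [sum_range_succ, ih, backwardDiff, add_sub_cancel]

theorem one_sub_mul_sum_range_mul_pow {R : Type*} [CommRing R] (a : ℕ → R) (z : R) (n : ℕ) :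
    (1 - z) * ∑ i ∈ range (n + 1), a i * z ^ i
      = ∑ i ∈ range (n + 1), backwardDiff a i * z ^ i - a n * z ^ (n + 1) := by
  induction n with
  | zero => simp only [zero_add, sum_range_one, pow_zero, mul_one, pow_one, backwardDiff]; ring
  | succ n ih =>
    rw [sum_range_succ, mul_add, ih, sum_range_succ _ (n + 1), backwardDiff]
    ring

theorem backwardDiff_pos {R : Type*} [AddCommGroup R] [PartialOrder R] [IsOrderedAddMonoid R]
    {a : ℕ → R} {n : ℕ} (h0 : 0 < a 0) (hmono : ∀ i < n, a i < a (i + 1)) :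
    ∀ i ≤ n, 0 < backwardDiff a i
  | 0, _ => h0
  | i + 1, hi => sub_pos.2 (hmono i hi)

theorem Complex.ofReal_backwardDiff (a : ℕ → ℝ) (i : ℕ) :
    ((backwardDiff a i : ℝ) : ℂ) = backwardDiff (fun j => (a j : ℂ)) i := by
  cases i <;> simp [backwardDiff]

theorem Complex.eq_one_of_norm_le_one_of_re_eq_one {u : ℂ} (hu : ‖u‖ ≤ 1) (hre : u.re = 1) :
    u = 1 := by
  have him : u.im = 0 := by
    rw [← Complex.abs_re_eq_norm]
    exact le_antisymm (Complex.abs_re_le_norm u) (by rw [hre, abs_one]; exact hu)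
  exact Complex.ext hre him

theorem Complex.eq_one_of_sum_mul_eq_sum {ι : Type*} {s : Finset ι} {c : ι → ℝ} {u : ι → ℂ}
    (hc : ∀ i ∈ s, 0 ≤ c i) (hu : ∀ i ∈ s, ‖u i‖ ≤ 1)
    (h : ∑ i ∈ s, c i * u i = ∑ i ∈ s, (c i : ℂ)) {j : ι} (hj : j ∈ s) (hcj : 0 < c j) :
    u j = 1 := by
  have hle : ∀ i ∈ s, c i * (u i).re ≤ c i := fun i hi =>
    mul_le_of_le_one_right (hc i hi) ((Complex.re_le_norm _).trans (hu i hi))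
  have hre : ∑ i ∈ s, c i * (u i).re = ∑ i ∈ s, c i := by
    simpa [Complex.re_sum] using congrArg Complex.re h
  exact eq_one_of_norm_le_one_of_re_eq_one (hu j hj)
    ((mul_eq_left₀ hcj.ne').1 ((sum_eq_sum_iff_of_le hle).1 hre j hj))

theorem eq_one_of_sum_eq_zero_of_one_le_norm {n : ℕ} {a : ℕ → ℝ}
    (hnonneg : ∀ i ≤ n, 0 ≤ backwardDiff a i) (hlast : 0 < backwardDiff a n) {z : ℂ}
    (hz : ∑ i ∈ range (n + 1), (a i : ℂ) * z ^ i = 0) (h1 : 1 ≤ ‖z‖) : z = 1 := by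
  have hz0 : z ≠ 0 := norm_pos_iff.1 (one_pos.trans_le h1)
  set w := z⁻¹
  have hw : ‖w‖ ≤ 1 := by rw [norm_inv]; exact inv_le_one_of_one_le₀ h1
  have hzw : ∀ i ≤ n, z ^ i * w ^ (n + 1) = w ^ (n + 1 - i) := fun i hi => by
    rw [← pow_mul_pow_sub w (hi.trans n.le_succ), ← mul_assoc, ← mul_pow, mul_inv_cancel₀ hz0,
      one_pow, one_mul]
  have key : ∑ i ∈ range (n + 1), ((backwardDiff a i : ℝ) : ℂ) * w ^ (n + 1 - i)
      = ∑ i ∈ range (n + 1), ((backwardDiff a i : ℝ) : ℂ) := by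
    have h := one_sub_mul_sum_range_mul_pow (fun i => (a i : ℂ)) z n
    rw [hz, mul_zero, eq_comm, sub_eq_zero] at h
    simp only [Complex.ofReal_backwardDiff, sum_range_succ_backwardDiff]
    calc ∑ i ∈ range (n + 1), backwardDiff (fun i => (a i : ℂ)) i * w ^ (n + 1 - i)
        = ∑ i ∈ range (n + 1), backwardDiff (fun i => (a i : ℂ)) i * z ^ i * w ^ (n + 1) :=
          sum_congr rfl fun i hi => by rw [mul_assoc, hzw i (Nat.lt_succ_iff.1 (mem_range.1 hi))]
      _ = a n := by rw [← sum_mul, h, mul_assoc, ← mul_pow, mul_inv_cancel₀ hz0, one_pow, mul_one]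
  have hw1 : w ^ (n + 1 - n) = 1 :=
    Complex.eq_one_of_sum_mul_eq_sum (j := n)
      (fun i hi => hnonneg i (Nat.lt_succ_iff.1 (mem_range.1 hi)))
      (fun i _ => by rw [norm_pow]; exact pow_le_one₀ (norm_nonneg w) hw) key
      (self_mem_range_succ n) hlast
  rwa [Nat.add_sub_cancel_left, pow_one, inv_eq_one] at hw1

theorem stmt10 (n : ℕ) (a : ℕ → ℝ) (h0 : 0 < a 0)
    (hmono : ∀ i, i < n → a i < a (i + 1))
    (z : ℂ) (hz : (∑ i ∈ Finset.range (n + 1), (a i : ℂ) * z ^ i) = 0) :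
    ‖z‖ < 1 := by
  have hdiff := backwardDiff_pos h0 hmono
  by_contra! h1
  obtain rfl := eq_one_of_sum_eq_zero_of_one_le_norm (fun i hi => (hdiff i hi).le)
    (hdiff n le_rfl) hz h1
  have hpos : ∀ i ∈ range (n + 1), 0 < a i := fun i hi => by
    rw [← sum_range_succ_backwardDiff a i]
    exact sum_pos (fun j hj => hdiff j (by simp only [mem_range] at hi hj; omega)) nonempty_range_add_one
  have hsum : ((∑ i ∈ range (n + 1), a i : ℝ) : ℂ) = 0 := by push_cast; simpa using hz
  exact (sum_pos hpos nonempty_range_add_one).ne' (by exact_mod_cast hsum)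
end

section
/- If A is an n×n upper triangular Toeplitz matrix with ‖A‖ ≤ 1, then there exists an analytic function f on the open unit disc with sup_{|z|<1} |f(z)| ≤ 1 such that A = Tₙ(f). -/
/-- The `n × n` upper triangular Toeplitz matrix built from the Taylor
coefficients of `f` at `0`. -/
noncomputable def Tn (n : ℕ) (f : ℂ → ℂ) : Matrix (Fin n) (Fin n) ℂ :=
  Matrix.of fun j k : Fin n =>
    if (j : ℕ) ≤ (k : ℕ) then iteratedDeriv ((k : ℕ) - (j : ℕ)) f 0 / ((k : ℕ) - (j : ℕ)).factorial
    else 0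

open PowerSeries Topology Metric
open scoped ContDiff Nat ComplexConjugate Matrix

namespace PowerSeries

variable {R : Type*} [CommSemiring R]

theorem sum_ite_coeff_mul_ite_coeff {n : ℕ} (S T : R⟦X⟧) (j k : Fin n) :
    ∑ l : Fin n, (if (j : ℕ) ≤ l then coeff ((l : ℕ) - j) S else 0) *
        (if (l : ℕ) ≤ k then coeff ((k : ℕ) - l) T else 0) =
      if (j : ℕ) ≤ k then coeff ((k : ℕ) - j) (S * T) else 0 := by
  simp only [ite_zero_mul_ite_zero]
  rw [Fin.sum_univ_eq_sum_range (fun l => if (j : ℕ) ≤ l ∧ l ≤ k then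
    coeff (l - j) S * coeff (k - l) T else 0)]
  split_ifs with hjk
  -- only `j ≤ l ≤ k` contributes, and `l = j + p` reindexes these terms by `antidiagonal (k - j)`
  · have hk := k.isLt
    rw [coeff_mul, Finset.Nat.sum_antidiagonal_eq_sum_range_succ (fun p q => coeff p S * coeff q T),
      ← Finset.sum_subset (s₁ := Finset.Ico (j : ℕ) (k + 1)), Finset.sum_Ico_eq_sum_range]
    · refine Finset.sum_congr (by congr 1; omega) fun p hp => ?_
      rw [Finset.mem_range] at hp
      rw [if_pos (by omega), Nat.add_sub_cancel_left, Nat.sub_add_eq]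
    · intro l hl
      simp only [Finset.mem_Ico, Finset.mem_range] at hl ⊢
      omega
    · intro l _ hl
      simp only [Finset.mem_Ico] at hl
      rw [if_neg (by omega)]
  · exact Finset.sum_eq_zero fun l _ => if_neg (by omega)

/-- `toeplitz n S` is the matrix of multiplication by `S` on `R⟦X⟧ ⧸ (X ^ n)` in the basis
`X ^ (n - 1), …, X, 1`; in particular it is multiplicative. -/
noncomputable def toeplitz (n : ℕ) : R⟦X⟧ →ₐ[R] Matrix (Fin n) (Fin n) R where
  toFun S := Matrix.of fun j k => if (j : ℕ) ≤ k then coeff ((k : ℕ) - j) S else 0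
  map_one' := by
    ext j k
    simp only [coeff_one, Matrix.of_apply, Matrix.one_apply, Fin.ext_iff]
    split_ifs <;> first | rfl | omega
  map_mul' S T := by
    ext j k
    exact (sum_ite_coeff_mul_ite_coeff S T j k).symm
  map_zero' := by ext; simp
  map_add' S T := by ext; simp only [map_add, Matrix.of_apply, Matrix.add_apply]; split_ifs <;> simp
  commutes' r := by
    ext j k
    simp only [algebraMap_eq, coeff_C, Matrix.of_apply, Matrix.algebraMap_eq_diagonal,
      Matrix.diagonal_apply, Pi.algebraMap_apply, Algebra.algebraMap_self, RingHom.id_apply,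
      Fin.ext_iff]
    split_ifs <;> first | rfl | omega

@[simp]
theorem toeplitz_apply {n : ℕ} (S : R⟦X⟧) (j k : Fin n) :
    toeplitz n S j k = if (j : ℕ) ≤ k then coeff ((k : ℕ) - j) S else 0 := rfl

theorem toeplitz_eq_toeplitz_iff {n : ℕ} {S T : R⟦X⟧} :
    toeplitz n S = toeplitz n T ↔ ∀ k < n, coeff k S = coeff k T := by
  constructor
  · intro h k hk
    simpa using congrFun₂ h ⟨0, by omega⟩ ⟨k, hk⟩
  · intro h
    ext j k
    simp only [toeplitz_apply]
    split_ifs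
    · exact h _ (by omega)
    · rfl

theorem toeplitz_X_mul_congr {n : ℕ} {S T : R⟦X⟧} (h : toeplitz n S = toeplitz n T) :
    toeplitz (n + 1) (X * S) = toeplitz (n + 1) (X * T) := by
  rw [toeplitz_eq_toeplitz_iff] at h ⊢
  rintro (_ | k) hk
  · simp
  · simpa using h k (by omega)

theorem toeplitz_X_mul_submatrix (n : ℕ) (S : R⟦X⟧) :
    (toeplitz (n + 1) (X * S)).submatrix Fin.castSucc Fin.succ = toeplitz n S := by
  ext j k
  simp only [Matrix.submatrix_apply, toeplitz_apply, Fin.val_castSucc, Fin.val_succ]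
  by_cases hjk : (j : ℕ) ≤ k
  · rw [if_pos (by omega), if_pos hjk, Nat.sub_add_comm hjk, coeff_succ_X_mul]
  · by_cases hj : (j : ℕ) = k + 1
    · rw [if_pos (by omega), if_neg hjk, hj, Nat.sub_self, coeff_zero_X_mul]
    · rw [if_neg (by omega), if_neg hjk]

end PowerSeries

section Taylor

variable {𝕜 : Type*} [NontriviallyNormedField 𝕜] {f g : 𝕜 → 𝕜} {x : 𝕜}

noncomputable def taylorSeries (f : 𝕜 → 𝕜) (x : 𝕜) : 𝕜⟦X⟧ :=
  PowerSeries.mk fun k => iteratedDeriv k f x / k !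

@[simp]
theorem coeff_taylorSeries (k : ℕ) : coeff k (taylorSeries f x) = iteratedDeriv k f x / k ! :=
  coeff_mk _ _

theorem taylorSeries_const (c : 𝕜) : taylorSeries (fun _ => c) x = C c := by
  ext k
  rcases k with _ | k <;> simp [iteratedDeriv_const, coeff_C]

theorem taylorSeries_id_zero : taylorSeries (fun y => y) (0 : 𝕜) = X := by
  ext k
  rcases k with _ | _ | k <;> simp [iteratedDeriv_fun_id_zero, coeff_X]

theorem Filter.EventuallyEq.taylorSeries_eq (h : f =ᶠ[𝓝 x] g) :
    taylorSeries f x = taylorSeries g x := by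
  ext k
  simp [h.iteratedDeriv_eq k]

theorem taylorSeries_add (hf : ContDiffAt 𝕜 ∞ f x) (hg : ContDiffAt 𝕜 ∞ g x) :
    taylorSeries (fun y => f y + g y) x = taylorSeries f x + taylorSeries g x := by
  ext k
  simp [iteratedDeriv_fun_add (hf.of_le (mod_cast le_top)) (hg.of_le (mod_cast le_top)), add_div]

theorem taylorSeries_mul [CharZero 𝕜] (hf : ContDiffAt 𝕜 ∞ f x) (hg : ContDiffAt 𝕜 ∞ g x) :
    taylorSeries (fun y => f y * g y) x = taylorSeries f x * taylorSeries g x := by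
  ext k
  rw [coeff_taylorSeries, iteratedDeriv_fun_mul (hf.of_le (mod_cast le_top))
    (hg.of_le (mod_cast le_top)), coeff_mul, Finset.Nat.sum_antidiagonal_eq_sum_range_succ_mk,
    Finset.sum_div]
  refine Finset.sum_congr rfl fun i hi => ?_
  have hik : i ≤ k := Nat.lt_succ_iff.mp (Finset.mem_range.mp hi)
  have hchoose : (k.choose i : 𝕜) ≠ 0 := by exact_mod_cast (Nat.choose_pos hik).ne'
  rw [coeff_taylorSeries, coeff_taylorSeries, ← Nat.choose_mul_factorial_mul_factorial hik]
  push_cast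
  field_simp

end Taylor

section Mobius

variable {𝕜 E : Type*} [RCLike 𝕜] [NormedAddCommGroup E] [InnerProductSpace 𝕜 E]

theorem norm_sub_smul_le_norm_sub_conj_smul {u v : E} {a : 𝕜} (ha : ‖a‖ ≤ 1)
    (hvu : ‖v‖ ≤ ‖u‖) : ‖v - a • u‖ ≤ ‖u - conj a • v‖ := by
  have hinner : RCLike.re (inner 𝕜 v (a • u)) = RCLike.re (inner 𝕜 u (conj a • v)) := by
    rw [inner_smul_right, inner_smul_right, ← inner_conj_symm u v, ← map_mul, RCLike.conj_re]
  have key : ‖u - conj a • v‖ ^ 2 - ‖v - a • u‖ ^ 2 = (1 - ‖a‖ ^ 2) * (‖u‖ ^ 2 - ‖v‖ ^ 2) := by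
    rw [norm_sub_sq (𝕜 := 𝕜), norm_sub_sq (𝕜 := 𝕜), hinner, norm_smul, norm_smul,
      RCLike.norm_conj]
    ring
  have hnonneg : 0 ≤ (1 - ‖a‖ ^ 2) * (‖u‖ ^ 2 - ‖v‖ ^ 2) :=
    mul_nonneg (by nlinarith [norm_nonneg a]) (by nlinarith [norm_nonneg v])
  exact (sq_le_sq₀ (norm_nonneg _) (norm_nonneg _)).mp (by linarith)

theorem ContinuousLinearMap.norm_le_one_of_mul_one_sub_conj_smul {T S : E →L[𝕜] E} {a : 𝕜}
    (hT : ‖T‖ ≤ 1) (ha : ‖a‖ ≤ 1) (hunit : IsUnit (1 - conj a • T))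
    (hS : S * (1 - conj a • T) = T - a • 1) : ‖S‖ ≤ 1 := by
  refine S.opNorm_le_bound zero_le_one fun y => ?_
  obtain ⟨x, rfl⟩ : ∃ x, (1 - conj a • T) x = y := ⟨(↑hunit.unit⁻¹ : E →L[𝕜] E) y, by
    rw [← mul_apply_eq_comp, hunit.mul_val_inv, one_apply_eq_self]⟩
  have hTx : ‖T x‖ ≤ ‖x‖ := T.le_of_opNorm_le hT x |>.trans_eq (one_mul _)
  rw [← mul_apply_eq_comp, hS]
  simpa using norm_sub_smul_le_norm_sub_conj_smul ha hTx

theorem Complex.norm_add_le_norm_one_add_conj_mul {a w : ℂ} (ha : ‖a‖ ≤ 1) (hw : ‖w‖ ≤ 1) :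
    ‖a + w‖ ≤ ‖1 + conj a * w‖ := by
  simpa [add_comm, sub_eq_add_neg] using
    norm_sub_smul_le_norm_sub_conj_smul (u := (1 : ℂ)) (v := w) (a := -a) (by simpa) (by simpa)

end Mobius

section EuclideanNorm

variable {𝕜 ι κ : Type*} [RCLike 𝕜] [Fintype ι] [Fintype κ] {e : ι → κ}

theorem Function.Injective.sum_extend_zero {R M : Type*} [Zero R] [AddCommMonoid M]
    (he : e.Injective) (y : ι → R) {g : κ → R → M} (hg : ∀ j, g j 0 = 0) :
    ∑ j, g j (extend e y 0 j) = ∑ i, g (e i) (y i) := by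
  rw [← Finset.sum_subset (Finset.subset_univ (Finset.univ.map ⟨e, he⟩)), Finset.sum_map]
  · simp [he.extend_apply]
  · intro j _ hj
    simp only [Finset.mem_map, Finset.mem_univ, true_and, Function.Embedding.coeFn_mk] at hj
    simp [Function.extend_apply' _ _ _ hj, hg]

theorem EuclideanSpace.norm_toLp_comp_le (he : e.Injective) (x : EuclideanSpace 𝕜 κ) :
    ‖WithLp.toLp 2 (x.ofLp ∘ e)‖ ≤ ‖x‖ := by
  rw [← sq_le_sq₀ (norm_nonneg _) (norm_nonneg _), EuclideanSpace.norm_sq_eq,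
    EuclideanSpace.norm_sq_eq]
  exact (Finset.sum_map Finset.univ ⟨e, he⟩ fun j => ‖x.ofLp j‖ ^ 2).symm.trans_le
    (Finset.sum_le_univ_sum_of_nonneg fun _ => sq_nonneg _)

theorem EuclideanSpace.norm_toLp_extend_zero (he : e.Injective) (y : EuclideanSpace 𝕜 ι) :
    ‖WithLp.toLp 2 (Function.extend e y.ofLp 0)‖ = ‖y‖ := by
  rw [← sq_eq_sq₀ (norm_nonneg _) (norm_nonneg _), EuclideanSpace.norm_sq_eq,
    EuclideanSpace.norm_sq_eq]
  exact he.sum_extend_zero y.ofLp (g := fun _ c => ‖c‖ ^ 2) (by simp)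

end EuclideanNorm

theorem opN_submatrix_le {m n : ℕ} (A : Matrix (Fin n) (Fin n) ℂ) {e₁ e₂ : Fin m → Fin n}
    (he₁ : e₁.Injective) (he₂ : e₂.Injective) : opN (A.submatrix e₁ e₂) ≤ opN A := by
  refine ContinuousLinearMap.opNorm_le_bound _ (norm_nonneg _) fun y => ?_
  set z : EuclideanSpace ℂ (Fin n) := WithLp.toLp 2 (Function.extend e₂ y.ofLp 0)
  have hmulVec : A.submatrix e₁ e₂ *ᵥ y.ofLp = (A *ᵥ z.ofLp) ∘ e₁ := by
    ext i
    exact (he₂.sum_extend_zero y.ofLp (g := fun j c => A (e₁ i) j * c) fun _ => mul_zero _).symm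
  calc ‖Matrix.toEuclideanCLM (𝕜 := ℂ) (A.submatrix e₁ e₂) y‖
      = ‖WithLp.toLp 2 ((Matrix.toEuclideanCLM (𝕜 := ℂ) A z).ofLp ∘ e₁)‖ := by
        congr 1
        ext i
        simp only [Matrix.ofLp_toEuclideanCLM, hmulVec]
    _ ≤ ‖Matrix.toEuclideanCLM (𝕜 := ℂ) A z‖ := EuclideanSpace.norm_toLp_comp_le he₁ _
    _ ≤ opN A * ‖z‖ := (Matrix.toEuclideanCLM (𝕜 := ℂ) A).le_opNorm z
    _ = opN A * ‖y‖ := by rw [EuclideanSpace.norm_toLp_extend_zero he₂]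

theorem sum_norm_sq_le_opN_sq {n : ℕ} (A : Matrix (Fin n) (Fin n) ℂ) (k : Fin n) :
    ∑ j, ‖A j k‖ ^ 2 ≤ opN A ^ 2 := by
  have h := (Matrix.toEuclideanCLM (𝕜 := ℂ) A).le_opNorm (EuclideanSpace.single k 1)
  rw [PiLp.norm_single, norm_one, mul_one] at h
  simpa [opN, EuclideanSpace.norm_sq_eq, Matrix.mulVec_single_one] using
    pow_le_pow_left₀ (norm_nonneg _) h 2

namespace PowerSeries

theorem sum_norm_sq_coeff_le_opN_sq (n : ℕ) (S : ℂ⟦X⟧) :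
    ∑ k ∈ Finset.range (n + 1), ‖coeff k S‖ ^ 2 ≤ opN (toeplitz (n + 1) S) ^ 2 := by
  refine le_trans (le_of_eq ?_) (sum_norm_sq_le_opN_sq _ (Fin.last n))
  rw [← Finset.sum_range_reflect,
    ← Fin.sum_univ_eq_sum_range (fun j => ‖coeff (n + 1 - 1 - j) S‖ ^ 2)]
  refine Finset.sum_congr rfl fun j _ => ?_
  simp [Nat.lt_succ_iff.mp j.isLt]

theorem norm_constantCoeff_le_one {n : ℕ} {S : ℂ⟦X⟧} (hS : opN (toeplitz (n + 1) S) ≤ 1) :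
    ‖constantCoeff S‖ ≤ 1 := by
  have h := (Finset.single_le_sum (fun k _ => sq_nonneg ‖coeff k S‖)
    (Finset.mem_range.mpr n.succ_pos)).trans (sum_norm_sq_coeff_le_opN_sq n S)
  rw [coeff_zero_eq_constantCoeff_apply] at h
  exact (sq_le_one_iff₀ (norm_nonneg _)).mp (h.trans (pow_le_one₀ (norm_nonneg _) hS))

theorem opN_toeplitz_le_one_of_mul_one_sub {n : ℕ} {S B : ℂ⟦X⟧} {a : ℂ}
    (hS : opN (toeplitz n S) ≤ 1) (ha : ‖a‖ ≤ 1) (hU : IsUnit (1 - C (conj a) * S))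
    (hB : B * (1 - C (conj a) * S) = S - C a) : opN (toeplitz n B) ≤ 1 := by
  set Φ := (AlgHomClass.toAlgHom (Matrix.toEuclideanCLM (n := Fin n) (𝕜 := ℂ))).comp (toeplitz n)
  have hΦC (c : ℂ) : Φ (C c) = c • 1 := (Φ.commutes c).trans (Algebra.algebraMap_eq_smul_one c)
  have hΦU : Φ (1 - C (conj a) * S) = 1 - conj a • Φ S := by
    rw [map_sub, map_one, map_mul, hΦC, smul_one_mul]
  refine ContinuousLinearMap.norm_le_one_of_mul_one_sub_conj_smul (T := Φ S) (S := Φ B) hS ha ?_ ?_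
  · rw [← hΦU]
    exact hU.map Φ
  · rw [← hΦU, ← map_mul, hB, map_sub, hΦC]

theorem toeplitz_eq_C_of_norm_constantCoeff_eq_one {n : ℕ} {S : ℂ⟦X⟧}
    (hS : opN (toeplitz (n + 1) S) ≤ 1) (ha : ‖constantCoeff S‖ = 1) :
    toeplitz (n + 1) S = toeplitz (n + 1) (C (constantCoeff S)) := by
  have h := (sum_norm_sq_coeff_le_opN_sq n S).trans (pow_le_one₀ (norm_nonneg _) hS)
  rw [Finset.sum_range_succ', coeff_zero_eq_constantCoeff_apply, ha, one_pow] at h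
  have hzero := (Finset.sum_eq_zero_iff_of_nonneg fun k _ => sq_nonneg ‖coeff (k + 1) S‖).mp
    (le_antisymm (by linarith) (Finset.sum_nonneg fun _ _ => sq_nonneg _))
  rw [toeplitz_eq_toeplitz_iff]
  rintro (_ | k) hk
  · simp
  · simpa [coeff_C] using hzero k (Finset.mem_range.mpr (by omega))

theorem exists_schur_transform {n : ℕ} {S : ℂ⟦X⟧} (hS : opN (toeplitz (n + 1) S) ≤ 1)
    (ha : ‖constantCoeff S‖ < 1) :
    ∃ R : ℂ⟦X⟧, opN (toeplitz n R) ≤ 1 ∧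
      S * (1 + C (conj (constantCoeff S)) * (X * R)) = C (constantCoeff S) + X * R := by
  set a := constantCoeff S with ha_def
  have hU : IsUnit (1 - C (conj a) * S) := by
    rw [isUnit_iff_constantCoeff, isUnit_iff_ne_zero]
    simp only [map_sub, map_one, map_mul, constantCoeff_C, ← ha_def]
    intro h
    have h1 : ‖conj a * a‖ = 1 := by rw [← eq_of_sub_eq_zero h, norm_one]
    rw [norm_mul, Complex.norm_conj] at h1
    nlinarith [norm_nonneg a]
  obtain ⟨B, hB⟩ : ∃ B, B * (1 - C (conj a) * S) = S - C a :=
    ⟨(S - C a) * ↑hU.unit⁻¹, by rw [mul_assoc, hU.val_inv_mul, mul_one]⟩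
  have hB0 : constantCoeff B = 0 := by
    have h := congrArg constantCoeff hB
    rw [map_mul, map_sub constantCoeff S, constantCoeff_C, sub_self] at h
    exact (mul_eq_zero.mp h).resolve_right (hU.map constantCoeff).ne_zero
  obtain ⟨R, rfl⟩ := X_dvd_iff.mpr hB0
  refine ⟨R, ?_, by linear_combination -hB⟩
  calc opN (toeplitz n R)
      = opN ((toeplitz (n + 1) (X * R)).submatrix Fin.castSucc Fin.succ) := by
        rw [toeplitz_X_mul_submatrix]
    _ ≤ opN (toeplitz (n + 1) (X * R)) :=
        opN_submatrix_le _ (Fin.castSucc_injective n) (Fin.succ_injective n)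
    _ ≤ 1 := opN_toeplitz_le_one_of_mul_one_sub hS ha.le hU hB

end PowerSeries

def IsSchurFunction (f : ℂ → ℂ) : Prop :=
  DifferentiableOn ℂ f (ball 0 1) ∧ ∀ z ∈ ball (0 : ℂ) 1, ‖f z‖ ≤ 1

namespace IsSchurFunction

variable {g : ℂ → ℂ} {a : ℂ}

theorem const (ha : ‖a‖ ≤ 1) : IsSchurFunction fun _ => a :=
  ⟨differentiableOn_const a, fun _ _ => ha⟩

theorem norm_mul_le_one (hg : IsSchurFunction g) {z : ℂ} (hz : z ∈ ball (0 : ℂ) 1) :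
    ‖z * g z‖ ≤ 1 := by
  rw [norm_mul]
  exact mul_le_one₀ (mem_ball_zero_iff.mp hz).le (norm_nonneg _) (hg.2 z hz)

theorem one_add_conj_mul_ne_zero (hg : IsSchurFunction g) (ha : ‖a‖ < 1) {z : ℂ}
    (hz : z ∈ ball (0 : ℂ) 1) : 1 + conj a * (z * g z) ≠ 0 := by
  intro h
  have h1 : ‖conj a * (z * g z)‖ = 1 := by rw [eq_neg_of_add_eq_zero_right h, norm_neg, norm_one]
  rw [norm_mul, Complex.norm_conj] at h1
  nlinarith [hg.norm_mul_le_one hz, norm_nonneg a, norm_nonneg (z * g z)]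

theorem mobius (hg : IsSchurFunction g) (ha : ‖a‖ < 1) :
    IsSchurFunction fun z => (a + z * g z) / (1 + conj a * (z * g z)) := by
  have hg' := hg.1
  refine ⟨DifferentiableOn.div (by fun_prop) (by fun_prop)
    fun z hz => hg.one_add_conj_mul_ne_zero ha hz, fun z hz => ?_⟩
  rw [norm_div, div_le_one (norm_pos_iff.mpr (hg.one_add_conj_mul_ne_zero ha hz))]
  exact Complex.norm_add_le_norm_one_add_conj_mul ha.le (hg.norm_mul_le_one hz)

theorem taylorSeries_mobius_mul (hg : IsSchurFunction g) (ha : ‖a‖ < 1) :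
    taylorSeries (fun z => (a + z * g z) / (1 + conj a * (z * g z))) 0 *
        (1 + C (conj a) * (X * taylorSeries g 0)) = C a + X * taylorSeries g 0 := by
  have smooth {h : ℂ → ℂ} (hh : DifferentiableOn ℂ h (ball 0 1)) : ContDiffAt ℂ ∞ h 0 :=
    (hh.contDiffOn isOpen_ball).contDiffAt (ball_mem_nhds 0 one_pos)
  have hg' := hg.1
  have hzg : taylorSeries (fun z => z * g z) 0 = X * taylorSeries g 0 := by
    rw [taylorSeries_mul (f := fun z => z) (smooth differentiableOn_id) (smooth hg'),
      taylorSeries_id_zero]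
  have hnum : taylorSeries (fun z => a + z * g z) 0 = C a + X * taylorSeries g 0 := by
    rw [taylorSeries_add (f := fun _ => a) (smooth (by fun_prop)) (smooth (by fun_prop)),
      taylorSeries_const, hzg]
  have hden : taylorSeries (fun z => 1 + conj a * (z * g z)) 0 =
      1 + C (conj a) * (X * taylorSeries g 0) := by
    rw [taylorSeries_add (f := fun _ => 1) (smooth (by fun_prop)) (smooth (by fun_prop)),
      taylorSeries_mul (f := fun _ => conj a) (smooth (by fun_prop)) (smooth (by fun_prop)),
      taylorSeries_const, taylorSeries_const, hzg, map_one]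
  have hcancel : (fun z => (a + z * g z) / (1 + conj a * (z * g z)) *
      (1 + conj a * (z * g z))) =ᶠ[𝓝 0] fun z => a + z * g z := by
    filter_upwards [ball_mem_nhds 0 one_pos] with z hz
    exact div_mul_cancel₀ _ (hg.one_add_conj_mul_ne_zero ha hz)
  rw [← hden, ← hnum, ← taylorSeries_mul (smooth (hg.mobius ha).1) (smooth (by fun_prop)),
    hcancel.taylorSeries_eq]

end IsSchurFunction

theorem exists_isSchurFunction_of_schur_transform {n : ℕ} {S R : ℂ⟦X⟧}
    (ha : ‖constantCoeff S‖ < 1)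
    (hSR : S * (1 + C (conj (constantCoeff S)) * (X * R)) = C (constantCoeff S) + X * R)
    {g : ℂ → ℂ} (hg : IsSchurFunction g) (hgR : toeplitz n (taylorSeries g 0) = toeplitz n R) :
    ∃ f, IsSchurFunction f ∧ toeplitz (n + 1) (taylorSeries f 0) = toeplitz (n + 1) S := by
  set a := constantCoeff S
  refine ⟨_, hg.mobius ha, ?_⟩
  set ψ := toeplitz (R := ℂ) (n + 1)
  have hXG : ψ (X * taylorSeries g 0) = ψ (X * R) := toeplitz_X_mul_congr hgR
  have hunit : IsUnit (ψ (1 + C (conj a) * (X * R))) :=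
    (isUnit_iff_constantCoeff.mpr (by simp)).map ψ
  have hD : ψ (1 + C (conj a) * (X * taylorSeries g 0)) = ψ (1 + C (conj a) * (X * R)) := by
    rw [map_add, map_add, map_mul ψ (C _), map_mul ψ (C _), hXG]
  -- modulo `X ^ (n + 1)` both series solve the same linear equation, whose coefficient is a unit
  rw [← hunit.mul_left_inj]
  calc ψ (taylorSeries (fun z => (a + z * g z) / (1 + conj a * (z * g z))) 0) *
        ψ (1 + C (conj a) * (X * R))
      = ψ (taylorSeries (fun z => (a + z * g z) / (1 + conj a * (z * g z))) 0 *
          (1 + C (conj a) * (X * taylorSeries g 0))) := by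
        rw [map_mul, hD]
    _ = ψ (C a + X * R) := by rw [hg.taylorSeries_mobius_mul ha, map_add, hXG, ← map_add]
    _ = ψ S * ψ (1 + C (conj a) * (X * R)) := by rw [← hSR, map_mul]

theorem exists_isSchurFunction_toeplitz_eq (n : ℕ) (S : ℂ⟦X⟧) (hS : opN (toeplitz n S) ≤ 1) :
    ∃ f, IsSchurFunction f ∧ toeplitz n (taylorSeries f 0) = toeplitz n S := by
  induction n generalizing S with
  | zero => exact ⟨_, IsSchurFunction.const (a := 0) (by simp), Subsingleton.elim _ _⟩
  | succ n ih =>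
    rcases (norm_constantCoeff_le_one hS).lt_or_eq with ha | ha
    · obtain ⟨R, hR, hSR⟩ := exists_schur_transform hS ha
      obtain ⟨g, hg, hgR⟩ := ih R hR
      exact exists_isSchurFunction_of_schur_transform ha hSR hg hgR
    · refine ⟨_, IsSchurFunction.const ha.le, ?_⟩
      rw [taylorSeries_const, toeplitz_eq_C_of_norm_constantCoeff_eq_one hS ha]

theorem Tn_eq_toeplitz_taylorSeries (n : ℕ) (f : ℂ → ℂ) :
    Tn n f = toeplitz n (taylorSeries f 0) := by
  ext j k
  simp [Tn]

theorem stmt14 {n : ℕ} (a : ℕ → ℂ) (A : Matrix (Fin n) (Fin n) ℂ)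
    (hA : A = Matrix.of fun j k : Fin n =>
      if (j : ℕ) ≤ (k : ℕ) then a ((k : ℕ) - (j : ℕ)) else 0)
    (hnorm : opN A ≤ 1) :
    ∃ f : ℂ → ℂ, DifferentiableOn ℂ f (Metric.ball 0 1) ∧
      (∀ z ∈ Metric.ball (0 : ℂ) 1, ‖f z‖ ≤ 1) ∧ A = Tn n f := by
  have hA' : A = toeplitz n (PowerSeries.mk a) := by
    rw [hA]
    ext j k
    simp
  rw [hA'] at hnorm ⊢
  obtain ⟨f, ⟨hdiff, hbound⟩, hf⟩ := exists_isSchurFunction_toeplitz_eq n _ hnorm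
  exact ⟨f, hdiff, hbound, by rw [Tn_eq_toeplitz_taylorSeries, hf]⟩
end

section
/- Let A be an n×n complex matrix with minimal polynomial of degree m, ‖A‖ ≤ 1, and 1 ∉ spec(A). Then dist(1, spec(A)) · ‖(I − A)⁻¹‖ ≤ 2m. -/
open ComplexConjugate Filter Topology Polynomial

noncomputable section

theorem Commute.ringInverse_right {M₀ : Type*} [MonoidWithZero M₀] {a u : M₀}
    (h : Commute a u) : Commute a (Ring.inverse u) := by
  by_cases hu : IsUnit u
  · obtain ⟨u, rfl⟩ := hu
    simpa only [Ring.inverse_unit] using h.units_inv_right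
  · simp only [Ring.inverse_non_unit u hu, Commute.zero_right]

theorem map_ringInverse {F A B : Type*} [Semiring A] [Semiring B] [EquivLike F A B]
    [RingEquivClass F A B] (f : F) (x : A) : f (Ring.inverse x) = Ring.inverse (f x) := by
  by_cases hx : IsUnit x
  · rw [← one_mul (Ring.inverse (f x)), Ring.eq_mul_inverse_iff_mul_eq _ _ _ (hx.map f), ← map_mul,
      Ring.inverse_mul_cancel x hx, map_one]
  · rw [Ring.inverse_non_unit x hx, Ring.inverse_non_unit _ (by rwa [isUnit_map_iff]), map_zero]

theorem List.prod_map_mul_of_commute {ι M : Type*} [Monoid M] {f g : ι → M} (l : List ι)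
    (h : ∀ i ∈ l, ∀ j ∈ l, Commute (g i) (f j)) :
    (l.map fun i => f i * g i).prod = (l.map f).prod * (l.map g).prod := by
  induction l with
  | nil => simp
  | cons a l ih =>
    have hcomm : Commute (g a) (l.map f).prod :=
      Commute.list_prod_right _ _ <| by
        simpa using fun j hj => h a (by simp) j (List.mem_cons_of_mem a hj)
    simp only [List.map_cons, List.prod_cons]
    rw [ih fun i hi j hj => h i (List.mem_cons_of_mem a hi) j (List.mem_cons_of_mem a hj),
      mul_assoc, ← mul_assoc (g a), hcomm.eq, mul_assoc, mul_assoc]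

theorem List.prod_map_smul_eq_pow_length_smul {R A : Type*} [CommMonoid R] [Monoid A]
    [MulAction R A] [IsScalarTower R A A] [SMulCommClass R A A] (t : R) (l : List A) :
    (l.map (t • ·)).prod = t ^ l.length • l.prod := by
  induction l with
  | nil => simp
  | cons a l ih =>
    rw [List.map_cons, List.prod_cons, ih, smul_mul_smul_comm, List.length_cons,
      List.prod_cons, pow_succ']

theorem Polynomial.list_prod_sub_smul_one_roots_eq_zero {K A : Type*} [Field K] [Ring A]
    [Algebra K A] {p : K[X]} (hp : p.Monic) (hs : p.Splits) {x : A} (hx : aeval x p = 0) :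
    (p.roots.toList.map fun z => x - z • 1).prod = 0 := by
  rw [hs.eq_prod_roots_of_monic hp, ← Multiset.coe_toList p.roots, Multiset.map_coe,
    Multiset.prod_coe, map_list_prod, List.map_map] at hx
  simpa [Function.comp_def, Algebra.algebraMap_eq_smul_one] using hx

theorem Matrix.mem_spectrum_of_isRoot_minpoly {n K : Type*} [Fintype n] [DecidableEq n] [Field K]
    {A : Matrix n n K} {z : K} (hz : (minpoly K A).IsRoot z) : z ∈ spectrum K A := by
  rw [← Matrix.spectrum_toLin', ← Module.End.hasEigenvalue_iff_mem_spectrum,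
    Module.End.hasEigenvalue_iff_isRoot, Matrix.minpoly_toLin']
  exact hz

theorem List.exists_mul_eq_one_sub_prod_map {ι R : Type*} [SeminormedRing R] (a : R)
    {C D : ι → R} (l : List ι) (hC : ∀ i ∈ l, ‖C i‖ ≤ 1) (hCD : ∀ i ∈ l, 1 - C i = D i * a) :
    ∃ S, S * a = 1 - (l.map C).prod ∧ ‖S‖ ≤ (l.map fun i => ‖D i‖).sum := by
  induction l with
  | nil => exact ⟨0, by simp, by simp⟩
  | cons i l ih =>
    obtain ⟨S, hS, hSn⟩ := ih (fun j hj => hC j (List.mem_cons_of_mem i hj))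
      (fun j hj => hCD j (List.mem_cons_of_mem i hj))
    refine ⟨D i + C i * S, ?_, ?_⟩
    · rw [add_mul, mul_assoc, hS, ← hCD i List.mem_cons_self, List.map_cons, List.prod_cons]
      noncomm_ring
    · calc ‖D i + C i * S‖ ≤ ‖D i‖ + ‖C i‖ * ‖S‖ :=
            (norm_add_le _ _).trans (add_le_add_right (norm_mul_le _ _) _)
        _ ≤ ‖D i‖ + 1 * (l.map fun i => ‖D i‖).sum := by
            gcongr
            exact hC i List.mem_cons_self
        _ = ((i :: l).map fun i => ‖D i‖).sum := by simp

theorem NormedRing.norm_ringInverse_one_sub_le {R : Type*} [NormedRing R]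
    [HasSummableGeomSeries R] (h1 : ‖(1 : R)‖ ≤ 1) {x : R} (hx : ‖x‖ < 1) :
    ‖Ring.inverse (1 - x)‖ ≤ (1 - ‖x‖)⁻¹ := by
  rw [← geom_series_eq_inverse x hx]
  linarith [tsum_geometric_le_of_norm_lt_one x hx]

namespace ContinuousLinearMap

variable {H : Type*} [NormedAddCommGroup H] [InnerProductSpace ℂ H]

theorem norm_mul_ringInverse_le_one {A B : H →L[ℂ] H} (hB : IsUnit B)
    (h : ∀ x, ‖A x‖ ≤ ‖B x‖) : ‖A * Ring.inverse B‖ ≤ 1 := by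
  refine opNorm_le_bound _ zero_le_one fun y => ?_
  have hy : B (Ring.inverse B y) = y := by
    change (B * Ring.inverse B) y = y
    rw [Ring.mul_inverse_cancel B hB]; rfl
  simpa [hy] using h (Ring.inverse B y)

def blaschke (z : ℂ) (T : H →L[ℂ] H) : H →L[ℂ] H :=
  (T - z • 1) * (((1 - conj z) / (1 - z)) • Ring.inverse (1 - conj z • T))

variable {T : H →L[ℂ] H}

/-- `‖x - z̄ T x‖² - ‖T x - z x‖² = (1 - ‖z‖²) (‖x‖² - ‖T x‖²)`. -/
theorem norm_apply_sub_smul_le (hT : ‖T‖ ≤ 1) {z : ℂ} (hz : ‖z‖ ≤ 1) (x : H) :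
    ‖T x - z • x‖ ≤ ‖x - conj z • T x‖ := by
  have hTx : ‖T x‖ ≤ ‖x‖ := T.le_of_opNorm_le hT x |>.trans_eq (one_mul _)
  have hre : RCLike.re (inner ℂ (T x) (z • x)) = RCLike.re (inner ℂ x (conj z • T x)) := by
    rw [inner_smul_right, inner_smul_right, ← inner_conj_symm x (T x), ← map_mul]
    exact (Complex.conj_re _).symm
  have hsq : ‖T x - z • x‖ ^ 2 ≤ ‖x - conj z • T x‖ ^ 2 := by
    rw [norm_sub_sq (𝕜 := ℂ), norm_sub_sq (𝕜 := ℂ), hre, norm_smul, norm_smul, Complex.norm_conj]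
    nlinarith [mul_nonneg (sub_nonneg.2 (pow_le_one₀ (n := 2) (norm_nonneg z) hz))
      (sub_nonneg.2 (pow_le_pow_left₀ (norm_nonneg _) hTx 2))]
  exact pow_le_pow_iff_left₀ (norm_nonneg _) (norm_nonneg _) two_ne_zero |>.1 hsq

theorem commute_sub_smul_one_ringInverse (T : H →L[ℂ] H) (a w : ℂ) :
    Commute (T - a • 1) (Ring.inverse (1 - w • T)) :=
  Commute.ringInverse_right <|
    ((Commute.one_right T).sub_right ((Commute.refl T).smul_right w)).sub_left
      ((Commute.one_left _).smul_left a)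

theorem list_prod_blaschke_eq_zero {l : List ℂ} (hl : (l.map fun z => T - z • 1).prod = 0) :
    (l.map (blaschke · T)).prod = 0 := by
  simp only [blaschke]
  rw [List.prod_map_mul_of_commute, hl, zero_mul]
  exact fun z _ a _ => ((commute_sub_smul_one_ringInverse T a (conj z)).symm.smul_left _)

variable [CompleteSpace H]

theorem isUnit_one_sub_smul (hT : ‖T‖ ≤ 1) {w : ℂ} (hw : ‖w‖ < 1) : IsUnit (1 - w • T) :=
  isUnit_one_sub_of_norm_lt_one <| (norm_smul_le w T).trans_lt <| by nlinarith [norm_nonneg w]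

theorem norm_ringInverse_one_sub_smul_le (hT : ‖T‖ ≤ 1) {w : ℂ} (hw : ‖w‖ < 1) :
    ‖Ring.inverse (1 - w • T)‖ ≤ (1 - ‖w‖)⁻¹ := by
  have hwT : ‖w • T‖ ≤ ‖w‖ := (norm_smul_le w T).trans <| by nlinarith [norm_nonneg w]
  calc ‖Ring.inverse (1 - w • T)‖ ≤ (1 - ‖w • T‖)⁻¹ :=
        NormedRing.norm_ringInverse_one_sub_le norm_id_le (hwT.trans_lt hw)
    _ ≤ (1 - ‖w‖)⁻¹ := by gcongr

theorem norm_blaschke_le (hT : ‖T‖ ≤ 1) {z : ℂ} (hz : ‖z‖ < 1) : ‖blaschke z T‖ ≤ 1 := by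
  have hrot : ‖(1 - conj z) / (1 - z)‖ ≤ 1 := by
    rw [show 1 - conj z = conj (1 - z) by simp, norm_div, Complex.norm_conj]
    exact div_self_le_one ‖1 - z‖
  have hb : ‖(T - z • 1) * Ring.inverse (1 - conj z • T)‖ ≤ 1 :=
    norm_mul_ringInverse_le_one (isUnit_one_sub_smul hT (by rwa [Complex.norm_conj]))
      fun x => by simpa using norm_apply_sub_smul_le hT hz.le x
  rw [blaschke, mul_smul_comm, norm_smul]
  exact mul_le_one₀ hrot (norm_nonneg _) hb

theorem one_sub_blaschke (hT : ‖T‖ ≤ 1) {z : ℂ} (hz : ‖z‖ < 1) :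
    1 - blaschke z T
      = (((1 - z * conj z) / (1 - z)) • Ring.inverse (1 - conj z • T)) * (1 - T) := by
  have hz1 : 1 - z ≠ 0 := sub_ne_zero.2 fun h => by simp [← h] at hz
  have hu := isUnit_one_sub_smul hT (w := conj z) (by rwa [Complex.norm_conj])
  have hR := commute_sub_smul_one_ringInverse T z (conj z)
  calc 1 - blaschke z T
      = Ring.inverse (1 - conj z • T) * (1 - conj z • T)
        - Ring.inverse (1 - conj z • T) * (((1 - conj z) / (1 - z)) • (T - z • 1)) := by
        rw [blaschke, Ring.inverse_mul_cancel _ hu, mul_smul_comm, hR.eq, ← mul_smul_comm]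
    _ = Ring.inverse (1 - conj z • T) * (((1 - z * conj z) / (1 - z)) • (1 - T)) := by
        rw [← mul_sub]
        congr 1
        match_scalars <;> field_simp <;> ring
    _ = (((1 - z * conj z) / (1 - z)) • Ring.inverse (1 - conj z • T)) * (1 - T) := by
        rw [mul_smul_comm, smul_mul_assoc]

theorem norm_smul_ringInverse_one_sub_conj_smul_le (hT : ‖T‖ ≤ 1) {z : ℂ} (hz : ‖z‖ < 1) :
    ‖((1 - z * conj z) / (1 - z)) • Ring.inverse (1 - conj z • T)‖ ≤ (1 + ‖z‖) / ‖1 - z‖ := by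
  have hz0 := norm_nonneg z
  have hz1 : 0 < ‖1 - z‖ := norm_pos_iff.2 <| sub_ne_zero.2 fun h => by simp [← h] at hz
  have hnum : ‖1 - z * conj z‖ = 1 - ‖z‖ ^ 2 := by
    rw [Complex.mul_conj', ← Complex.ofReal_pow, ← Complex.ofReal_one, ← Complex.ofReal_sub,
      Complex.norm_real, Real.norm_of_nonneg (by nlinarith)]
  calc ‖((1 - z * conj z) / (1 - z)) • Ring.inverse (1 - conj z • T)‖
      ≤ (1 - ‖z‖ ^ 2) / ‖1 - z‖ * (1 - ‖z‖)⁻¹ := by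
        rw [norm_smul, norm_div, hnum]
        gcongr
        · exact div_nonneg (by nlinarith) hz1.le
        · simpa using norm_ringInverse_one_sub_smul_le hT (w := conj z) (by simpa using hz)
    _ = (1 + ‖z‖) / ‖1 - z‖ := by
        field_simp [(by linarith : 1 - ‖z‖ ≠ 0)]
        ring

theorem norm_ringInverse_one_sub_le_of_norm_lt_one (hT : ‖T‖ ≤ 1) (h1 : IsUnit (1 - T))
    {l : List ℂ} (hl : ∀ z ∈ l, ‖z‖ < 1) (hprod : (l.map fun z => T - z • 1).prod = 0) :
    ‖Ring.inverse (1 - T)‖ ≤ (l.map fun z => (1 + ‖z‖) / ‖1 - z‖).sum := by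
  obtain ⟨S, hS, hSn⟩ := l.exists_mul_eq_one_sub_prod_map (1 - T)
    (fun z hz => norm_blaschke_le hT (hl z hz)) (fun z hz => one_sub_blaschke hT (hl z hz))
  rw [list_prod_blaschke_eq_zero hprod, sub_zero] at hS
  rw [← one_mul (Ring.inverse _), ← (Ring.eq_mul_inverse_iff_mul_eq S 1 _ h1).2 hS]
  exact hSn.trans <| List.sum_le_sum fun z hz =>
    norm_smul_ringInverse_one_sub_conj_smul_le hT (hl z hz)

theorem norm_ringInverse_one_sub_le (hT : ‖T‖ ≤ 1) (h1 : IsUnit (1 - T)) {l : List ℂ}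
    (hl : ∀ z ∈ l, ‖z‖ ≤ 1) (hl1 : ∀ z ∈ l, z ≠ 1)
    (hprod : (l.map fun z => T - z • 1).prod = 0) :
    ‖Ring.inverse (1 - T)‖ ≤ (l.map fun z => (1 + ‖z‖) / ‖1 - z‖).sum := by
  have hscaled : ∀ t ∈ Set.Ioo (0 : ℝ) 1, ‖Ring.inverse (1 - (t : ℂ) • T)‖
      ≤ (l.map fun z => (1 + ‖(t : ℂ) * z‖) / ‖1 - (t : ℂ) * z‖).sum := by
    rintro t ⟨ht0, ht1⟩
    have htn : ‖(t : ℂ)‖ = t := by simp [abs_of_pos ht0]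
    have hprod' : ((l.map ((t : ℂ) * ·)).map fun w => (t : ℂ) • T - w • 1).prod = 0 := by
      simp only [List.map_map, Function.comp_def, mul_smul, ← smul_sub]
      rw [show (fun z => (t : ℂ) • (T - z • 1)) = ((t : ℂ) • ·) ∘ fun z => T - z • 1 from rfl,
        ← List.map_map, List.prod_map_smul_eq_pow_length_smul, hprod, smul_zero]
    have := norm_ringInverse_one_sub_le_of_norm_lt_one (T := (t : ℂ) • T)
      ((norm_smul_le _ _).trans (by nlinarith [norm_nonneg T]))
      (isUnit_one_sub_smul hT (by rwa [htn]))
      (by simp only [List.mem_map]; rintro _ ⟨z, hz, rfl⟩; rw [norm_mul, htn]; nlinarith [hl z hz])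
      hprod'
    simpa [List.map_map, Function.comp_def] using this
  refine le_of_tendsto_of_tendsto (b := 𝓝[<] (1 : ℝ)) ?_ ?_
    (eventually_of_mem (Ioo_mem_nhdsLT zero_lt_one) hscaled)
  · have hc : ContinuousAt (fun t : ℝ => Ring.inverse (1 - (t : ℂ) • T)) 1 := by
      refine ContinuousAt.comp (g := Ring.inverse) ?_ (by fun_prop)
      simpa using NormedRing.inverse_continuousAt h1.unit
    simpa using hc.norm.tendsto.mono_left nhdsWithin_le_nhds
  · refine tendsto_list_sum l fun z hz => ?_
    have : ContinuousAt (fun t : ℝ => (1 + ‖(t : ℂ) * z‖) / ‖1 - (t : ℂ) * z‖) 1 :=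
      ContinuousAt.div (by fun_prop) (by fun_prop) (by simpa [sub_eq_zero] using (hl1 z hz).symm)
    simpa using this.tendsto.mono_left nhdsWithin_le_nhds

theorem infDist_one_spectrum_mul_norm_ringInverse_le (hT : ‖T‖ ≤ 1) (h1 : 1 ∉ spectrum ℂ T)
    {l : List ℂ} (hl : ∀ z ∈ l, z ∈ spectrum ℂ T) (hprod : (l.map fun z => T - z • 1).prod = 0) :
    Metric.infDist 1 (spectrum ℂ T) * ‖Ring.inverse (1 - T)‖ ≤ 2 * l.length := by
  set d := Metric.infDist 1 (spectrum ℂ T)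
  have hl1 : ∀ z ∈ l, z ≠ 1 := fun z hz h => h1 (h ▸ hl z hz)
  have hnorm : ∀ z ∈ l, ‖z‖ ≤ 1 := fun z hz => by
    have : Nontrivial H := by
      by_contra h
      rw [not_nontrivial_iff_subsingleton] at h
      simpa [spectrum.of_subsingleton] using hl z hz
    exact (spectrum.norm_le_norm_of_mem (hl z hz)).trans hT
  have hterm : ∀ z ∈ l, d * ((1 + ‖z‖) / ‖1 - z‖) ≤ 2 := fun z hz => by
    have hpos : 0 < ‖1 - z‖ := norm_pos_iff.2 (sub_ne_zero.2 (hl1 z hz).symm)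
    have hdz : d ≤ ‖1 - z‖ := by
      simpa [dist_eq_norm] using Metric.infDist_le_dist_of_mem (x := 1) (hl z hz)
    rw [mul_div_assoc', div_le_iff₀ hpos]
    nlinarith [hnorm z hz, Metric.infDist_nonneg (x := (1 : ℂ)) (s := spectrum ℂ T)]
  calc d * ‖Ring.inverse (1 - T)‖ ≤ d * (l.map fun z => (1 + ‖z‖) / ‖1 - z‖).sum :=
        mul_le_mul_of_nonneg_left
          (norm_ringInverse_one_sub_le hT (by simpa using spectrum.notMem_iff.1 h1) hnorm hl1 hprod)
          Metric.infDist_nonneg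
    _ = (l.map fun z => d * ((1 + ‖z‖) / ‖1 - z‖)).sum := (List.sum_map_mul_left _ _ _).symm
    _ ≤ (l.map fun z => d * ((1 + ‖z‖) / ‖1 - z‖)).length • 2 :=
        List.sum_le_card_nsmul _ _ (by simpa using hterm)
    _ = 2 * l.length := by simp [mul_comm]

end ContinuousLinearMap

end

theorem stmt15 {n : ℕ} (A : Matrix (Fin n) (Fin n) ℂ) (m : ℕ)
    (hm : (minpoly ℂ A).natDegree = m)
    (hA : opN A ≤ 1) (h1 : (1 : ℂ) ∉ spectrum ℂ A) :
    Metric.infDist 1 (spectrum ℂ A) * opN (1 - A)⁻¹ ≤ 2 * m := by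
  set e := Matrix.toEuclideanCLM (𝕜 := ℂ) (n := Fin n)
  have hσ : spectrum ℂ (e A) = spectrum ℂ A := AlgEquiv.spectrum_eq _ A
  have hmin : minpoly ℂ (e A) = minpoly ℂ A := minpoly.algEquiv_eq e.toAlgEquiv A
  have hint : IsIntegral ℂ A := Algebra.IsIntegral.isIntegral A
  have hlen : (minpoly ℂ A).roots.toList.length = m := by
    rw [Multiset.length_toList, splits_iff_card_roots.1 (IsAlgClosed.splits _), hm]
  rw [opN, Matrix.nonsing_inv_eq_ringInverse, map_ringInverse, map_sub, map_one, ← hσ, ← hlen]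
  refine ContinuousLinearMap.infDist_one_spectrum_mul_norm_ringInverse_le hA (hσ ▸ h1)
    (fun z hz => ?_) ?_
  · exact hσ ▸ Matrix.mem_spectrum_of_isRoot_minpoly
      (isRoot_of_mem_roots (Multiset.mem_toList.1 hz))
  · refine list_prod_sub_smul_one_roots_eq_zero (minpoly.monic hint) (IsAlgClosed.splits _) ?_
    rw [← hmin]
    exact minpoly.aeval ℂ (e A)
end
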